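/- arXiv:1010.4497 — 9 statements merged into one kernel-verified Lean document; each statement's English description precedes it below -/
import Mathlib

section
/- Let M = (V, D) be a proper set system and v ∈ V. Then d_{M+v} = d_M, |d_M − d_{M*v}| ≤ 1, and |d_M − d_{M∂v}| ≤ 1; that is, applying a loop complementation on v does not change the minimum cardinality of a set in the system, and applying a pivot or a dual pivot on v changes it by at most one. -/
/-!
Each operation is compared with `D` member by member: if every member of either family lies
within `k` in cardinality of some member of the other, the two minimum cardinalities differ by at
most `k`. For the pivot on `X` this holds with `k = |X|`. Loop complementation and dual pivot both
have the shape `D ∆ f '' {Z ∈ D | P Z}` with `f` sending `P`-sets to non-`P`-sets, so a member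
`f Z` of `D` removed by the operation leaves its preimage `Z` in place; both comparisons then
reduce to `|Z| ≤ |f Z| + k`, which holds with `k = 0` for `Z ↦ Z ∪ {v}` and `k = 1` for
`Z ↦ Z \ {v}`.
-/

open scoped symmDiff

variable {V : Type*} [DecidableEq V] [Fintype V]

/-- Distance from `X` to the set system with family `D`. -/
noncomputable def dSS (D : Set (Finset V)) (X : Finset V) : ℕ :=
  sInf ((fun Y => (X ∆ Y).card) '' D)

/-- Pivot (twist) of a set-system family on `X`. -/
def pivotSS (D : Set (Finset V)) (X : Finset V) : Set (Finset V) :=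
  (fun Y => Y ∆ X) '' D

/-- Loop complementation on `v`. -/
def lcSS (D : Set (Finset V)) (v : V) : Set (Finset V) :=
  D ∆ ((fun Z => Z ∪ {v}) '' {Z ∈ D | v ∉ Z})

/-- Dual pivot on `v`. -/
def dpSS (D : Set (Finset V)) (v : V) : Set (Finset V) :=
  D ∆ ((fun Z => Z \ {v}) '' {Z ∈ D | v ∈ Z})

/-- Delta-matroid: proper set system with the symmetric exchange axiom. -/
def DeltaMatroid (D : Set (Finset V)) : Prop :=
  D.Nonempty ∧ ∀ X ∈ D, ∀ Y ∈ D, ∀ u ∈ X ∆ Y, ∃ v ∈ X ∆ Y, X ∆ {u, v} ∈ D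

/-- Inclusion-minimal members. -/
def minFam (D : Set (Finset V)) : Set (Finset V) :=
  {X ∈ D | ∀ Y ∈ D, Y ⊆ X → Y = X}

/-- Inclusion-maximal members. -/
def maxFam (D : Set (Finset V)) : Set (Finset V) :=
  {X ∈ D | ∀ Y ∈ D, X ⊆ Y → Y = X}

/-- Members of minimum cardinality. -/
def minCardFam (D : Set (Finset V)) : Set (Finset V) :=
  {X ∈ D | ∀ Y ∈ D, X.card ≤ Y.card}

/-- Members of maximum cardinality. -/
def maxCardFam (D : Set (Finset V)) : Set (Finset V) :=
  {X ∈ D | ∀ Y ∈ D, Y.card ≤ X.card}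

/-- All members have the same cardinality. -/
def Equicardinal (F : Set (Finset V)) : Prop :=
  ∀ X ∈ F, ∀ Y ∈ F, X.card = Y.card

/-- Restriction of the family to subsets of `X`. -/
def restrictSS (D : Set (Finset V)) (X : Finset V) : Set (Finset V) :=
  {Y ∈ D | Y ⊆ X}

theorem mem_symmDiff_image_or {β : Type*} {D : Set β} {P : β → Prop} {f : β → β}
    (hPf : ∀ Z, P Z → ¬ P (f Z)) {X : β} (hX : X ∈ D) :
    X ∈ D ∆ (f '' {Z ∈ D | P Z}) ∨ ∃ Z ∈ D ∆ (f '' {Z ∈ D | P Z}), P Z ∧ f Z = X := by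
  by_cases hXf : X ∈ f '' {Z ∈ D | P Z}
  · obtain ⟨Z, ⟨hZD, hZ⟩, rfl⟩ := hXf
    refine .inr ⟨Z, .inl ⟨hZD, ?_⟩, hZ, rfl⟩
    rintro ⟨W, ⟨-, hW⟩, rfl⟩
    exact hPf W hW hZ
  · exact .inl (.inl ⟨hX, hXf⟩)

section

variable {α : Type*} [DecidableEq α]

theorem dSS_empty (D : Set (Finset α)) : dSS D ∅ = sInf (Finset.card '' D) := by
  simp only [dSS, ← Finset.bot_eq_empty, bot_symmDiff]

theorem dSS_empty_le_card {D : Set (Finset α)} {X : Finset α} (hX : X ∈ D) :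
    dSS D ∅ ≤ X.card := by
  rw [dSS_empty]
  exact Nat.sInf_le ⟨X, hX, rfl⟩

theorem exists_mem_card_eq_dSS_empty {D : Set (Finset α)} (hD : D.Nonempty) :
    ∃ X ∈ D, X.card = dSS D ∅ := by
  rw [dSS_empty]
  exact Nat.sInf_mem (hD.image _)

theorem dSS_empty_le_add {D E : Set (Finset α)} {k : ℕ} (hE : E.Nonempty)
    (h : ∀ Y ∈ E, ∃ X ∈ D, X.card ≤ Y.card + k) : dSS D ∅ ≤ dSS E ∅ + k := by
  obtain ⟨Y, hYE, hY⟩ := exists_mem_card_eq_dSS_empty hE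
  obtain ⟨X, hXD, hX⟩ := h Y hYE
  exact hY ▸ (dSS_empty_le_card hXD).trans hX

theorem abs_dSS_empty_sub_le {D E : Set (Finset α)} {k : ℕ}
    (hDE : ∀ X ∈ D, ∃ Y ∈ E, Y.card ≤ X.card + k)
    (hED : ∀ Y ∈ E, ∃ X ∈ D, X.card ≤ Y.card + k) :
    |(dSS D ∅ : ℤ) - dSS E ∅| ≤ k := by
  rcases D.eq_empty_or_nonempty with rfl | hD
  · have hE : E = ∅ := Set.eq_empty_of_forall_notMem fun Y hY ↦ by
      obtain ⟨X, hX, -⟩ := hED Y hY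
      exact hX
    simp [hE, dSS_empty]
  obtain ⟨X, hX⟩ := hD
  have hE : E.Nonempty := by
    obtain ⟨Y, hY, -⟩ := hDE X hX
    exact ⟨Y, hY⟩
  have h₁ := dSS_empty_le_add hE hED
  have h₂ := dSS_empty_le_add ⟨X, hX⟩ hDE
  rw [abs_sub_le_iff]
  omega

theorem card_le_card_symmDiff_add (Z X : Finset α) : Z.card ≤ (Z ∆ X).card + X.card :=
  (Finset.card_le_card (le_symmDiff_sup_right Z X)).trans (Finset.card_union_le _ _)

theorem abs_dSS_pivotSS_sub_le (D : Set (Finset α)) (X : Finset α) :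
    |(dSS D ∅ : ℤ) - dSS (pivotSS D X) ∅| ≤ X.card := by
  refine abs_dSS_empty_sub_le (fun Z hZ ↦ ⟨Z ∆ X, ⟨Z, hZ, rfl⟩, ?_⟩) ?_
  · simpa [symmDiff_symmDiff_cancel_right] using card_le_card_symmDiff_add (Z ∆ X) X
  · rintro _ ⟨Z, hZ, rfl⟩
    exact ⟨Z, hZ, card_le_card_symmDiff_add Z X⟩

theorem abs_dSS_symmDiff_image_sub_le (D : Set (Finset α)) {P : Finset α → Prop}
    {f : Finset α → Finset α} {k : ℕ} (hPf : ∀ Z, P Z → ¬ P (f Z))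
    (hcard : ∀ Z, P Z → Z.card ≤ (f Z).card + k) :
    |(dSS D ∅ : ℤ) - dSS (D ∆ (f '' {Z ∈ D | P Z})) ∅| ≤ k := by
  refine abs_dSS_empty_sub_le (fun X hX ↦ ?_) ?_
  · rcases mem_symmDiff_image_or hPf hX with hXE | ⟨Z, hZE, hZ, rfl⟩
    · exact ⟨X, hXE, Nat.le_add_right _ _⟩
    · exact ⟨Z, hZE, hcard Z hZ⟩
  · rintro Y (⟨hYD, -⟩ | ⟨⟨Z, ⟨hZD, hZ⟩, rfl⟩, -⟩)
    · exact ⟨Y, hYD, Nat.le_add_right _ _⟩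
    · exact ⟨Z, hZD, hcard Z hZ⟩

theorem dSS_lcSS (D : Set (Finset α)) (v : α) : dSS (lcSS D v) ∅ = dSS D ∅ := by
  have h := abs_dSS_symmDiff_image_sub_le D (P := (v ∉ ·)) (f := (· ∪ {v})) (k := 0)
    (fun Z _ ↦ by simp) (fun Z _ ↦ Finset.card_le_card Finset.subset_union_left)
  exact_mod_cast (sub_eq_zero.mp (abs_nonpos_iff.mp h)).symm

theorem abs_dSS_dpSS_sub_le (D : Set (Finset α)) (v : α) :
    |(dSS D ∅ : ℤ) - dSS (dpSS D v) ∅| ≤ 1 :=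
  abs_dSS_symmDiff_image_sub_le D (P := (v ∈ ·)) (f := (· \ {v}))
    (fun Z _ ↦ by simp)
    (fun Z _ ↦ by simpa using Finset.card_le_card_sdiff_add_card (s := Z) (t := {v}))

end

theorem dist_vertex_flip_le_one_general (D : Set (Finset V)) (v : V) :
    dSS (lcSS D v) ∅ = dSS D ∅ ∧
    |(dSS D ∅ : ℤ) - (dSS (pivotSS D {v}) ∅ : ℤ)| ≤ 1 ∧
    |(dSS D ∅ : ℤ) - (dSS (dpSS D v) ∅ : ℤ)| ≤ 1 :=
  ⟨dSS_lcSS D v, by simpa using abs_dSS_pivotSS_sub_le D {v}, abs_dSS_dpSS_sub_le D v⟩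

/-- loop complementation preserves `d_M`; pivot and dual pivot on a
single element change it by at most one. -/
theorem dist_vertex_flip_le_one (D : Set (Finset V)) (hD : D.Nonempty) (v : V) :
    dSS (lcSS D v) ∅ = dSS D ∅ ∧
    |(dSS D ∅ : ℤ) - (dSS (pivotSS D {v}) ∅ : ℤ)| ≤ 1 ∧
    |(dSS D ∅ : ℤ) - (dSS (dpSS D v) ∅ : ℤ)| ≤ 1 :=
  dist_vertex_flip_le_one_general D v
end

section
/- Let M = (V, D) be a proper set system, v ∈ V, and set m = min(d_M, d_{M*v}). Then d_{M∂v} ∈ {m, m+1}, and likewise d_{M*v} ∈ {d_M − 1, d_M, d_M + 1} with both d_M and d_{M*v} lying in {m, m+1}. In particular, the three values d_M, d_{M*v}, d_{M∂v} cannot be pairwise distinct. -/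
/-! Every member of `M∂v` lies in `M` or in `M*v`, which bounds `d_{M∂v}` below by
`min(d_M, d_{M*v})`. Conversely, each `Y` of `M` yields a member of `M∂v` inside `Y ∪ {v}`:
`Y` itself, or `Y ∪ {v}` when `Y = Z \ {v}` was removed from `M`. Since `Y ∪ {v}` is at most
one element larger than both `Y` and `Y △ {v}`, this bounds `d_{M∂v}` above by
`min(d_M, d_{M*v}) + 1`; the same one-element comparison gives `|d_M - d_{M*v}| ≤ 1`. -/

open scoped symmDiff

variable {V : Type*} [DecidableEq V] [Fintype V]

section Distance

variable {α : Type*} [DecidableEq α] {D E : Set (Finset α)} {X Y : Finset α}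

@[simp]
lemma Finset.empty_symmDiff (s : Finset α) : ∅ ∆ s = s :=
  bot_symmDiff s

lemma dSS_le (hY : Y ∈ D) : dSS D X ≤ (X ∆ Y).card :=
  Nat.sInf_le ⟨Y, hY, rfl⟩

lemma exists_mem_card_eq_dSS (hD : D.Nonempty) : ∃ Y ∈ D, (X ∆ Y).card = dSS D X :=
  Nat.sInf_mem (hD.image _)

lemma dSS_le_add_of_forall_exists {k : ℕ} (hD : D.Nonempty)
    (h : ∀ Y ∈ D, ∃ Z ∈ E, (X ∆ Z).card ≤ (X ∆ Y).card + k) :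
    dSS E X ≤ dSS D X + k := by
  obtain ⟨Y, hY, hYd⟩ := exists_mem_card_eq_dSS (X := X) hD
  obtain ⟨Z, hZ, hZY⟩ := h Y hY
  exact (dSS_le hZ).trans (hYd ▸ hZY)

lemma min_le_dSS_of_subset_union {F : Set (Finset α)} (hE : E.Nonempty) (hEDF : E ⊆ D ∪ F) :
    min (dSS D X) (dSS F X) ≤ dSS E X := by
  obtain ⟨W, hW, hWE⟩ := exists_mem_card_eq_dSS (X := X) hE
  rw [← hWE]
  rcases hEDF hW with hWD | hWF
  · exact (min_le_left _ _).trans (dSS_le hWD)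
  · exact (min_le_right _ _).trans (dSS_le hWF)

end Distance

section DualPivot

variable {α : Type*} [DecidableEq α] {D : Set (Finset α)} {Y : Finset α}

lemma card_symmDiff_singleton_le (Y : Finset α) (v : α) : (Y ∆ {v}).card ≤ Y.card + 1 :=
  (Finset.card_le_card Finset.symmDiff_subset_union).trans (Finset.card_union_le _ _)

lemma insert_symmDiff_singleton (Y : Finset α) (v : α) : insert v (Y ∆ {v}) = insert v Y := by
  ext x
  by_cases hx : x = v <;> simp [hx, Finset.mem_symmDiff]

lemma mem_dpSS_of_mem {v : α} (hY : Y ∈ D) (hv : v ∈ Y) : Y ∈ dpSS D v :=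
  Or.inl ⟨hY, fun ⟨_, _, hZ⟩ => by simp [← hZ] at hv⟩

lemma dpSS_subset_union_pivotSS (D : Set (Finset α)) (v : α) :
    dpSS D v ⊆ D ∪ pivotSS D {v} := by
  rintro W (⟨hW, -⟩ | ⟨⟨Z, ⟨hZ, hv⟩, rfl⟩, -⟩)
  · exact Or.inl hW
  · exact Or.inr ⟨Z, hZ, symmDiff_of_ge (Finset.singleton_subset_iff.2 hv)⟩

lemma exists_mem_dpSS_subset_insert (hY : Y ∈ D) (v : α) :
    ∃ W ∈ dpSS D v, W ⊆ insert v Y := by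
  by_cases hv : v ∈ Y
  · exact ⟨Y, mem_dpSS_of_mem hY hv, Finset.subset_insert v Y⟩
  by_cases hYdp : Y ∈ dpSS D v
  · exact ⟨Y, hYdp, Finset.subset_insert v Y⟩
  obtain ⟨Z, ⟨hZ, hvZ⟩, rfl⟩ : Y ∈ (fun Z => Z \ {v}) '' {Z ∈ D | v ∈ Z} := by
    by_contra hnot
    exact hYdp (Or.inl ⟨hY, hnot⟩)
  refine ⟨Z, mem_dpSS_of_mem hZ hvZ, fun x hx => ?_⟩
  by_cases hxv : x = v <;> simp [hx, hxv]

lemma exists_mem_dpSS_card_le (hY : Y ∈ D) (v : α) :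
    ∃ W ∈ dpSS D v, W.card ≤ Y.card + 1 ∧ W.card ≤ (Y ∆ {v}).card + 1 := by
  obtain ⟨W, hW, hWY⟩ := exists_mem_dpSS_subset_insert hY v
  have hW_le := Finset.card_le_card hWY
  refine ⟨W, hW, hW_le.trans (Finset.card_insert_le v Y), ?_⟩
  rw [← insert_symmDiff_singleton] at hW_le
  exact hW_le.trans (Finset.card_insert_le v _)

lemma dSS_pivotSS_le (hD : D.Nonempty) (v : α) : dSS (pivotSS D {v}) ∅ ≤ dSS D ∅ + 1 :=
  dSS_le_add_of_forall_exists hD fun Y hY =>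
    ⟨Y ∆ {v}, ⟨Y, hY, rfl⟩, by simpa using card_symmDiff_singleton_le Y v⟩

lemma dSS_le_dSS_pivotSS (hD : D.Nonempty) (v : α) : dSS D ∅ ≤ dSS (pivotSS D {v}) ∅ + 1 :=
  dSS_le_add_of_forall_exists (hD.image _) fun _ ⟨Y, hY, hYZ⟩ =>
    ⟨Y, hY, by simpa [← hYZ] using card_symmDiff_singleton_le (Y ∆ {v}) v⟩

lemma dSS_dpSS_le (hD : D.Nonempty) (v : α) : dSS (dpSS D v) ∅ ≤ dSS D ∅ + 1 :=
  dSS_le_add_of_forall_exists hD fun Y hY => by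
    obtain ⟨W, hW, hWY, -⟩ := exists_mem_dpSS_card_le hY v
    exact ⟨W, hW, by simpa using hWY⟩

lemma dSS_dpSS_le_dSS_pivotSS (hD : D.Nonempty) (v : α) :
    dSS (dpSS D v) ∅ ≤ dSS (pivotSS D {v}) ∅ + 1 :=
  dSS_le_add_of_forall_exists (hD.image _) fun _ ⟨Y, hY, hYZ⟩ => by
    obtain ⟨W, hW, -, hWY⟩ := exists_mem_dpSS_card_le hY v
    exact ⟨W, hW, by simpa [← hYZ] using hWY⟩

lemma dpSS_nonempty (hD : D.Nonempty) (v : α) : (dpSS D v).Nonempty :=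
  let ⟨_, hY⟩ := hD
  let ⟨W, hW, _⟩ := exists_mem_dpSS_subset_insert hY v
  ⟨W, hW⟩

lemma min_dSS_le_dSS_dpSS (hD : D.Nonempty) (v : α) :
    min (dSS D ∅) (dSS (pivotSS D {v}) ∅) ≤ dSS (dpSS D v) ∅ :=
  min_le_dSS_of_subset_union (dpSS_nonempty hD v) (dpSS_subset_union_pivotSS D v)

end DualPivot

/-- with `m = min(d_M, d_{M*v})`, all three of `d_M`, `d_{M*v}`,
`d_{M∂v}` lie in `{m, m+1}`; moreover `|d_M - d_{M*v}| ≤ 1` and the three values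
cannot be pairwise distinct. -/
theorem dist_dual_pivot_min (D : Set (Finset V)) (hD : D.Nonempty) (v : V) :
    (dSS (dpSS D v) ∅ = min (dSS D ∅) (dSS (pivotSS D {v}) ∅) ∨
     dSS (dpSS D v) ∅ = min (dSS D ∅) (dSS (pivotSS D {v}) ∅) + 1) ∧
    (dSS D ∅ = min (dSS D ∅) (dSS (pivotSS D {v}) ∅) ∨
     dSS D ∅ = min (dSS D ∅) (dSS (pivotSS D {v}) ∅) + 1) ∧
    (dSS (pivotSS D {v}) ∅ = min (dSS D ∅) (dSS (pivotSS D {v}) ∅) ∨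
     dSS (pivotSS D {v}) ∅ = min (dSS D ∅) (dSS (pivotSS D {v}) ∅) + 1) ∧
    |(dSS D ∅ : ℤ) - (dSS (pivotSS D {v}) ∅ : ℤ)| ≤ 1 ∧
    ¬(dSS D ∅ ≠ dSS (pivotSS D {v}) ∅ ∧ dSS D ∅ ≠ dSS (dpSS D v) ∅ ∧
      dSS (pivotSS D {v}) ∅ ≠ dSS (dpSS D v) ∅) := by
  have := dSS_pivotSS_le hD v
  have := dSS_le_dSS_pivotSS hD v
  have := dSS_dpSS_le hD v
  have := dSS_dpSS_le_dSS_pivotSS hD v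
  have := min_dSS_le_dSS_dpSS hD v
  refine ⟨by omega, by omega, by omega, abs_le.2 ⟨by omega, by omega⟩, by omega⟩
end

section
/- Let M = (V, D) be a proper set system. Then M is a delta-matroid if and only if M is isodistant, i.e., for every X ⊆ V the family of inclusion-minimal sets of M*X is equicardinal (equivalently, every inclusion-minimal set of M*X has cardinality d_M(X)). -/
open scoped symmDiff

variable {V : Type*} [DecidableEq V] [Fintype V]

/-!
In a delta-matroid, exchanging from a member `W` towards an inclusion-minimal member `Z` never
increases `|W|` and strictly shrinks `W \ Z`, so every minimal member has minimum cardinality;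
pivoting preserves the exchange axiom, so all pivots are isodistant as well.

Conversely, suppose the exchange fails for `X, Y ∈ D` and `u ∈ X ∆ Y`, and pivot on `X ∆ {u}`.
Then `{u}` (coming from `X`) is a minimal member, since `X ∆ {u} ∉ D`, while `(X ∆ Y) \ {u}`
(coming from `Y`) contains a minimal member; by equicardinality this is a singleton `{v}`, and
`{v} ∈ D * (X ∆ {u})` says exactly that `X ∆ {u, v} ∈ D`.
-/

open Finset

section SetSystem

variable {α : Type*} {D : Set (Finset α)}

lemma exists_mem_minFam_subset {S : Finset α} (hS : S ∈ D) : ∃ T ∈ minFam D, T ⊆ S := by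
  obtain ⟨T, hTS, hT, hTmin⟩ := exists_minimal_le_of_wellFoundedLT (· ∈ D) S hS
  exact ⟨T, ⟨hT, fun Y hY hYT => le_antisymm hYT (hTmin hY hYT)⟩, hTS⟩

variable [DecidableEq α]

lemma symmDiff_singleton_of_mem {s : Finset α} {u : α} (hu : u ∈ s) : s ∆ {u} = s.erase u := by
  ext x; by_cases hx : x = u <;> simp [mem_symmDiff, hx, hu]

lemma singleton_symmDiff_singleton {u v : α} (h : u ≠ v) : ({u} : Finset α) ∆ {v} = {u, v} := by
  rw [symmDiff_eq_union (disjoint_singleton.2 h), insert_eq]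

lemma card_symmDiff_pair_le {W : Finset α} {u : α} (hu : u ∈ W) (v : α) :
    (W ∆ {u, v}).card ≤ W.card :=
  calc (W ∆ {u, v}).card ≤ (insert v (W.erase u)).card := by
        refine card_le_card fun x hx => ?_
        simp only [mem_symmDiff, mem_insert, mem_singleton, mem_erase] at hx ⊢
        grind
    _ ≤ (W.erase u).card + 1 := card_insert_le _ _
    _ = W.card := card_erase_add_one hu

lemma sdiff_symmDiff_pair_ssubset {W Z : Finset α} {u v : α} (hu : u ∈ W \ Z)
    (hv : v ∈ W ∆ Z) : (W ∆ {u, v}) \ Z ⊂ W \ Z := by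
  refine (ssubset_iff_of_subset fun x hx => ?_).2 ⟨u, hu, ?_⟩
  · simp only [mem_sdiff, mem_symmDiff, mem_insert, mem_singleton] at hu hv hx ⊢
    grind
  · simp [mem_symmDiff, (mem_sdiff.1 hu).1]

lemma mem_pivotSS_iff {X Z : Finset α} : Z ∈ pivotSS D X ↔ Z ∆ X ∈ D :=
  ⟨by rintro ⟨Y, hY, rfl⟩; rwa [symmDiff_symmDiff_cancel_right],
    fun h => ⟨Z ∆ X, h, symmDiff_symmDiff_cancel_right _ _⟩⟩

theorem DeltaMatroid.pivot (h : DeltaMatroid D) (X : Finset α) : DeltaMatroid (pivotSS D X) := by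
  refine ⟨h.1.image _, ?_⟩
  rintro _ ⟨A, hA, rfl⟩ _ ⟨B, hB, rfl⟩ u hu
  have hAB : A ∆ X ∆ (B ∆ X) = A ∆ B := by
    rw [symmDiff_symmDiff_symmDiff_comm, symmDiff_self, symmDiff_bot]
  rw [hAB] at hu ⊢
  obtain ⟨v, hv, hAuv⟩ := h.2 A hA B hB u hu
  exact ⟨v, hv, A ∆ {u, v}, hAuv, symmDiff_right_comm _ _ _⟩

theorem DeltaMatroid.card_le_of_mem_minFam (h : DeltaMatroid D) {Z : Finset α}
    (hZ : Z ∈ minFam D) {W : Finset α} (hW : W ∈ D) : Z.card ≤ W.card := by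
  by_cases hWZ : W ⊆ Z
  · rw [hZ.2 W hW hWZ]
  obtain ⟨u, hu⟩ := sdiff_nonempty.2 hWZ
  obtain ⟨v, hv, hW'⟩ := h.2 W hW Z hZ.1 u (symmDiff_subset_sdiff hu)
  calc Z.card ≤ (W ∆ {u, v}).card := h.card_le_of_mem_minFam hZ hW'
    _ ≤ W.card := card_symmDiff_pair_le (mem_sdiff.1 hu).1 v
termination_by (W \ Z).card
decreasing_by exact card_lt_card (sdiff_symmDiff_pair_ssubset hu hv)

theorem DeltaMatroid.equicardinal_minFam (h : DeltaMatroid D) : Equicardinal (minFam D) :=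
  fun _ hZ₁ _ hZ₂ =>
    le_antisymm (h.card_le_of_mem_minFam hZ₁ hZ₂.1) (h.card_le_of_mem_minFam hZ₂ hZ₁.1)

theorem deltaMatroid_of_equicardinal_minFam_pivotSS (hD : D.Nonempty)
    (h : ∀ X : Finset α, Equicardinal (minFam (pivotSS D X))) : DeltaMatroid D := by
  refine ⟨hD, fun X hX Y hY u hu => ?_⟩
  by_cases hXu : X ∆ {u, u} ∈ D
  · exact ⟨u, hu, hXu⟩
  rw [pair_eq_singleton] at hXu
  have hu_min : {u} ∈ minFam (pivotSS D (X ∆ {u})) := by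
    refine ⟨mem_pivotSS_iff.2 ?_, fun Z hZ hZu => ?_⟩
    · rwa [symmDiff_comm, symmDiff_symmDiff_cancel_right]
    rcases subset_singleton_iff.1 hZu with rfl | rfl
    · rw [mem_pivotSS_iff, ← bot_eq_empty, bot_symmDiff] at hZ
      exact absurd hZ hXu
    · rfl
  have hS : (X ∆ Y).erase u ∈ pivotSS D (X ∆ {u}) := by
    rwa [mem_pivotSS_iff, ← symmDiff_singleton_of_mem hu, symmDiff_symmDiff_symmDiff_comm,
      symmDiff_self, symmDiff_bot, symmDiff_symmDiff_self']
  obtain ⟨T, hT, hTS⟩ := exists_mem_minFam_subset hS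
  obtain ⟨v, rfl⟩ := card_eq_one.1 ((h _ _ hT _ hu_min).trans (card_singleton u))
  obtain ⟨hvu, hv⟩ := mem_erase.1 (hTS (mem_singleton_self v))
  have hT' := mem_pivotSS_iff.1 hT.1
  rw [symmDiff_comm, symmDiff_assoc, singleton_symmDiff_singleton hvu.symm] at hT'
  exact ⟨v, hv, hT'⟩

end SetSystem

/-- a proper set system is a delta-matroid iff it is isodistant,
i.e. for every `X` the inclusion-minimal sets of `M*X` are equicardinal. -/
theorem deltaMatroid_iff_isodistant (D : Set (Finset V)) (hD : D.Nonempty) :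
    DeltaMatroid D ↔ ∀ X : Finset V, Equicardinal (minFam (pivotSS D X)) :=
  ⟨fun h X => (h.pivot X).equicardinal_minFam, deltaMatroid_of_equicardinal_minFam_pivotSS hD⟩
end

section
/- Let M = (V, D) be a delta-matroid and X ⊆ V such that M[X] is proper. Then d_{M[X]}(Y) = d_M(Y) for all Y ⊆ X. In particular, d_M(X) = min{|X \ Y| : Y ∈ D, Y ⊆ X} whenever some set of D is contained in X. -/
open scoped symmDiff

variable {V : Type*} [DecidableEq V] [Fintype V]

/-! Among the members of `D` nearest to `Y ⊆ X` there is one inside `X`. Indeed, if `u ∈ Z \ X`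
for some `Z ∈ D`, the exchange axiom applied to `Z`, `u` and a member `W ⊆ X` of `D` gives
`Z ∆ {u, v} ∈ D`; it is no farther from `Y` because `u ∈ Y ∆ Z`, and it has fewer elements
outside `X` because `v ∈ Z` or `v ∈ W ⊆ X`. -/

section

omit [Fintype V]

open Finset

lemma Finset.card_symmDiff_pair_le {A : Finset V} {u : V} (v : V) (hu : u ∈ A) :
    #(A ∆ {u, v}) ≤ #A := by
  have hsub : A ∆ {u, v} ⊆ insert v (A.erase u) := by
    intro x hx
    simp only [mem_symmDiff, mem_insert, mem_singleton, mem_erase] at hx ⊢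
    grind
  calc #(A ∆ {u, v}) ≤ #(insert v (A.erase u)) := card_le_card hsub
    _ ≤ #(A.erase u) + 1 := card_insert_le _ _
    _ = #A := card_erase_add_one hu

lemma dSS_le_card {D : Set (Finset V)} {Y Z : Finset V} (hZ : Z ∈ D) : dSS D Y ≤ #(Y ∆ Z) :=
  Nat.sInf_le ⟨Z, hZ, rfl⟩

lemma exists_card_eq_dSS {D : Set (Finset V)} (hD : D.Nonempty) (Y : Finset V) :
    ∃ Z ∈ D, #(Y ∆ Z) = dSS D Y :=
  Nat.sInf_mem (hD.image _)

lemma dSS_le_dSS_of_subset {D D' : Set (Finset V)} (hD' : D'.Nonempty) (h : D' ⊆ D)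
    (Y : Finset V) : dSS D Y ≤ dSS D' Y := by
  obtain ⟨Z, hZ, hZY⟩ := exists_card_eq_dSS hD' Y
  exact hZY ▸ dSS_le_card (h hZ)

namespace DeltaMatroid

variable {D : Set (Finset V)} {X Y : Finset V}

lemma exists_card_sdiff_lt (hD : DeltaMatroid D) {W : Finset V} (hW : W ∈ D) (hWX : W ⊆ X)
    (hYX : Y ⊆ X) {Z : Finset V} (hZ : Z ∈ D) {u : V} (hu : u ∈ Z \ X) :
    ∃ Z' ∈ D, #(Z' \ X) < #(Z \ X) ∧ #(Y ∆ Z') ≤ #(Y ∆ Z) := by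
  obtain ⟨huZ, huX⟩ := mem_sdiff.mp hu
  have huZW : u ∈ Z ∆ W := mem_symmDiff.mpr (Or.inl ⟨huZ, fun h => huX (hWX h)⟩)
  obtain ⟨v, hv, hZ'⟩ := hD.2 Z hZ W hW u huZW
  refine ⟨Z ∆ {u, v}, hZ', ?_, ?_⟩
  · have hsub : Z ∆ {u, v} \ X ⊆ (Z \ X).erase u := by
      intro x hx
      simp only [mem_symmDiff, mem_sdiff, mem_insert, mem_singleton, mem_erase] at hx hv ⊢
      have := @hWX x
      grind
    exact (card_le_card hsub).trans_lt (card_erase_lt_of_mem hu)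
  · have huYZ : u ∈ Y ∆ Z := mem_symmDiff.mpr (Or.inr ⟨huZ, fun h => huX (hYX h)⟩)
    rw [← symmDiff_assoc]
    exact card_symmDiff_pair_le v huYZ

lemma exists_mem_restrictSS_card_symmDiff_le (hD : DeltaMatroid D)
    (hX : (restrictSS D X).Nonempty) (hYX : Y ⊆ X) {Z : Finset V} (hZ : Z ∈ D) :
    ∃ Z' ∈ restrictSS D X, #(Y ∆ Z') ≤ #(Y ∆ Z) := by
  obtain ⟨W, hW, hWX⟩ := hX
  induction h : #(Z \ X) using Nat.strong_induction_on generalizing Z with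
  | _ n ih =>
    by_cases hZX : Z ⊆ X
    · exact ⟨Z, ⟨hZ, hZX⟩, le_rfl⟩
    obtain ⟨u, huZ, huX⟩ := not_subset.mp hZX
    obtain ⟨Z', hZ', hlt, hle⟩ :=
      exists_card_sdiff_lt hD hW hWX hYX hZ (mem_sdiff.mpr ⟨huZ, huX⟩)
    obtain ⟨Z'', hZ'', hle'⟩ := ih _ (h ▸ hlt) hZ' rfl
    exact ⟨Z'', hZ'', hle'.trans hle⟩

end DeltaMatroid

end

/-- for a delta-matroid `M` and `X` with `M[X]` proper,
`d_{M[X]}(Y) = d_M(Y)` for all `Y ⊆ X`; in particular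
`d_M(X) = min{|X \ Y| : Y ∈ D, Y ⊆ X}`. -/
theorem dist_restrict_deltaMatroid (D : Set (Finset V)) (hDM : DeltaMatroid D)
    (X : Finset V) (hX : (restrictSS D X).Nonempty) :
    (∀ Y : Finset V, Y ⊆ X → dSS (restrictSS D X) Y = dSS D Y) ∧
    dSS D X = sInf ((fun Y => (X \ Y).card) '' restrictSS D X) := by
  have hdist (Y : Finset V) (hYX : Y ⊆ X) : dSS (restrictSS D X) Y = dSS D Y := by
    refine le_antisymm ?_ (dSS_le_dSS_of_subset hX (fun _ hZ => hZ.1) Y)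
    obtain ⟨Z, hZ, hZY⟩ := exists_card_eq_dSS hDM.1 Y
    obtain ⟨Z', hZ', hle⟩ := hDM.exists_mem_restrictSS_card_symmDiff_le hX hYX hZ
    exact (dSS_le_card hZ').trans (hZY ▸ hle)
  refine ⟨hdist, ?_⟩
  rw [← hdist X subset_rfl, dSS]
  exact congrArg sInf (Set.image_congr fun Z hZ => by rw [symmDiff_of_ge hZ.2])
end

section
/- Let M = (V, D) be a delta-matroid and v ∈ V. Consider the three equicardinal families min(M), min(M*v), and min_card(M∂v). Precisely two of these three families are equal, say both equal to M1, and the third family M2 satisfies: every set of M2 has cardinality exactly one larger than every set of M1, and the pseudo-contraction of M2 on v equals M1, i.e., (V, {Y \ {v} : Y ∈ M2, v ∈ Y}) = M1. In particular, among the three values d_M, d_{M*v}, d_{M∂v}, precisely two are equal to some value m and the third equals m + 1. -/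
open scoped symmDiff

set_option linter.unusedSectionVars false

variable {V : Type*} [DecidableEq V] [Fintype V]

-- Auxiliary lemmas

lemma empty_symmDiff' (Y : Finset V) : (∅ : Finset V) ∆ Y = Y := by
  rw [← Finset.bot_eq_empty, bot_symmDiff]

lemma symmDiff_singleton_of_mem_s11 {X : Finset V} {v : V} (h : v ∈ X) :
    X ∆ {v} = X.erase v := by
  ext a
  by_cases hav : a = v <;> simp [Finset.mem_symmDiff, hav, h]

lemma symmDiff_singleton_of_not_mem {X : Finset V} {v : V} (h : v ∉ X) :
    X ∆ {v} = insert v X := by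
  ext a
  by_cases hav : a = v <;> simp [Finset.mem_symmDiff, hav, h]

lemma mem_pivot {D : Set (Finset V)} {Y X : Finset V} :
    Y ∈ pivotSS D X ↔ Y ∆ X ∈ D := by
  constructor
  · rintro ⟨Z, hZ, rfl⟩
    rwa [symmDiff_symmDiff_cancel_right]
  · intro h
    exact ⟨Y ∆ X, h, by show Y ∆ X ∆ X = Y; rw [symmDiff_symmDiff_cancel_right]⟩

lemma pivot_pivot (D : Set (Finset V)) (X : Finset V) :
    pivotSS (pivotSS D X) X = D := by
  ext Y
  rw [mem_pivot, mem_pivot, symmDiff_symmDiff_cancel_right]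

lemma pivot_deltaMatroid {D : Set (Finset V)} (hD : DeltaMatroid D) (W : Finset V) :
    DeltaMatroid (pivotSS D W) := by
  obtain ⟨⟨X₀, hX₀⟩, hex⟩ := hD
  refine ⟨⟨X₀ ∆ W, X₀, hX₀, rfl⟩, ?_⟩
  intro X hX Y hY u hu
  have h1 : X ∆ W ∈ D := mem_pivot.mp hX
  have h2 : Y ∆ W ∈ D := mem_pivot.mp hY
  have hXY : (X ∆ W) ∆ (Y ∆ W) = X ∆ Y := by
    rw [symmDiff_comm Y W, symmDiff_assoc, ← symmDiff_assoc W W Y, symmDiff_self,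
      bot_symmDiff]
  obtain ⟨w, hw, hmem⟩ := hex (X ∆ W) h1 (Y ∆ W) h2 u (by rwa [hXY])
  refine ⟨w, by rwa [hXY] at hw, ?_⟩
  rw [mem_pivot]
  have : X ∆ {u, w} ∆ W = X ∆ W ∆ {u, w} := by
    rw [symmDiff_assoc, symmDiff_comm ({u, w} : Finset V) W, ← symmDiff_assoc]
  rwa [this]

-- dp membership
lemma mem_dp_aux {D : Set (Finset V)} {v : V} {X : Finset V} :
    (X ∈ ((fun Z => Z \ {v}) '' {Z ∈ D | v ∈ Z})) ↔ (v ∉ X ∧ insert v X ∈ D) := by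
  constructor
  · rintro ⟨Z, ⟨hZ, hvZ⟩, rfl⟩
    refine ⟨by simp, ?_⟩
    have : insert v (Z \ {v}) = Z := by
      ext a; by_cases hav : a = v <;> simp [hav, hvZ]
    rwa [this]
  · rintro ⟨hvX, hX⟩
    refine ⟨insert v X, ⟨hX, by simp⟩, ?_⟩
    ext a; by_cases hav : a = v <;> simp [hav, hvX]

lemma mem_dp_of_mem {D : Set (Finset V)} {v : V} {X : Finset V} (h : v ∈ X) :
    X ∈ dpSS D v ↔ X ∈ D := by
  rw [dpSS, Set.mem_symmDiff]
  have h2 : ¬ (X ∈ ((fun Z => Z \ {v}) '' {Z ∈ D | v ∈ Z})) := by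
    rw [mem_dp_aux]; tauto
  tauto

lemma mem_dp_of_notMem {D : Set (Finset V)} {v : V} {X : Finset V} (h : v ∉ X) :
    X ∈ dpSS D v ↔ ((X ∈ D ∧ insert v X ∉ D) ∨ (X ∉ D ∧ insert v X ∈ D)) := by
  rw [dpSS, Set.mem_symmDiff, mem_dp_aux]
  tauto

-- dSS facts
lemma dSS_card_image (D : Set (Finset V)) :
    dSS D ∅ = sInf (Finset.card '' D) := by
  unfold dSS
  congr 1
  ext n
  constructor
  · rintro ⟨Y, hY, rfl⟩
    exact ⟨Y, hY, by show Y.card = (∅ ∆ Y).card; rw [empty_symmDiff']⟩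
  · rintro ⟨Y, hY, rfl⟩
    exact ⟨Y, hY, by show (∅ ∆ Y).card = Y.card; rw [empty_symmDiff']⟩

lemma dSS_le_s11 {D : Set (Finset V)} {X : Finset V} (h : X ∈ D) : dSS D ∅ ≤ X.card := by
  rw [dSS_card_image]
  exact Nat.sInf_le ⟨X, h, rfl⟩

lemma exists_dSS {D : Set (Finset V)} (h : D.Nonempty) :
    ∃ X ∈ D, X.card = dSS D ∅ := by
  rw [dSS_card_image]
  obtain ⟨X, hX, hc⟩ := Nat.sInf_mem (h.image Finset.card)
  exact ⟨X, hX, hc⟩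

lemma dSS_eq {D : Set (Finset V)} {k : ℕ} {X : Finset V} (hX : X ∈ D) (hc : X.card = k)
    (hlb : ∀ Y ∈ D, k ≤ Y.card) : dSS D ∅ = k := by
  rw [dSS_card_image]
  refine le_antisymm (hc ▸ Nat.sInf_le ⟨X, hX, rfl⟩) ?_
  refine le_csInf ⟨X.card, X, hX, rfl⟩ ?_
  rintro n ⟨Y, hY, rfl⟩
  exact hlb Y hY

lemma symmDiff_pair_assoc (Y A X : Finset V) : (Y ∆ A) ∆ X = (Y ∆ X) ∆ A := by
  rw [symmDiff_assoc, symmDiff_comm A X, ← symmDiff_assoc]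

lemma symmDiff_sdiff_of_subset {s t : Finset V} (h : s ⊆ t) : t ∆ s = t \ s := by
  rw [symmDiff_def, Finset.sdiff_eq_empty_iff_subset.mpr h]
  simp

lemma card_symmDiff_pair_le_s11 {Y : Finset V} {u w : V} (hu : u ∈ Y) :
    (Y ∆ {u, w}).card ≤ Y.card := by
  have hsub : Y ∆ {u, w} ⊆ insert w (Y.erase u) := by
    intro a ha
    rw [Finset.mem_symmDiff] at ha
    rcases ha with ⟨haY, hab⟩ | ⟨hab, haY⟩
    · simp only [Finset.mem_insert, Finset.mem_erase]
      simp only [Finset.mem_insert, Finset.mem_singleton] at hab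
      push_neg at hab
      exact Or.inr ⟨hab.1, haY⟩
    · simp only [Finset.mem_insert, Finset.mem_singleton] at hab
      rcases hab with rfl | rfl
      · exact absurd hu haY
      · simp
  calc (Y ∆ {u, w}).card ≤ (insert w (Y.erase u)).card := Finset.card_le_card hsub
    _ ≤ (Y.erase u).card + 1 := Finset.card_insert_le _ _
    _ = Y.card := Finset.card_erase_add_one hu

/-- In a delta-matroid, every inclusion-minimal set has minimum cardinality. -/
lemma minFam_card_le {D : Set (Finset V)} (hD : DeltaMatroid D) :
    ∀ X ∈ minFam D, ∀ Y ∈ D, X.card ≤ Y.card := by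
  intro X hX
  suffices h : ∀ n, ∀ Y ∈ D, (Y ∆ X).card = n → X.card ≤ Y.card by
    intro Y hY; exact h _ Y hY rfl
  intro n
  induction n using Nat.strong_induction_on with
  | _ n ih =>
    intro Y hY hn
    by_cases hsub : Y ⊆ X
    · rw [hX.2 Y hY hsub]
    · obtain ⟨u, huY, huX⟩ := Finset.not_subset.mp hsub
      have hu : u ∈ Y ∆ X := Finset.mem_symmDiff.mpr (Or.inl ⟨huY, huX⟩)
      obtain ⟨w, hw, hY'⟩ := hD.2 Y hY X hX.1 u hu
      have hpair : ({u, w} : Finset V) ⊆ Y ∆ X := by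
        intro a ha
        simp only [Finset.mem_insert, Finset.mem_singleton] at ha
        rcases ha with rfl | rfl
        exacts [hu, hw]
      have heq : (Y ∆ {u, w}) ∆ X = (Y ∆ X) \ {u, w} := by
        rw [symmDiff_pair_assoc, symmDiff_sdiff_of_subset hpair]
      have hlt : ((Y ∆ {u, w}) ∆ X).card < n := by
        rw [heq, ← hn]
        apply Finset.card_lt_card
        refine ⟨Finset.sdiff_subset, ?_⟩
        intro habs
        have := habs hu
        simp at this
      have := ih _ hlt (Y ∆ {u, w}) hY' rfl
      exact le_trans this (card_symmDiff_pair_le_s11 huY)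

/-- Key exchange lemma: if no member has cardinality below `m` and no member
containing `v` has cardinality below `m + 1`, then from a member `Z ∋ v` of
cardinality `m + 1` and any member `X` of cardinality `m` we get `insert v X ∈ D`. -/
lemma key_insert {D : Set (Finset V)} (hD : DeltaMatroid D) {v : V} {m : ℕ}
    (hlb : ∀ W ∈ D, m ≤ W.card) (hlb2 : ∀ W ∈ D, v ∈ W → m + 1 ≤ W.card) :
    ∀ n (Z : Finset V), Z ∈ D → v ∈ Z → Z.card = m + 1 →
      ∀ X ∈ D, X.card = m → (X ∆ Z).card = n → insert v X ∈ D := by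
  intro n
  induction n using Nat.strong_induction_on with
  | _ n ih =>
    intro Z hZ hvZ hZc X hX hXc hn
    have hvX : v ∉ X := fun h => by have := hlb2 X hX h; omega
    by_cases hZX : Z \ X = {v}
    · -- then Z = insert v X
      have hXZ : X ⊆ Z := by
        have h1 : (Z \ X).card = 1 := by rw [hZX]; simp
        have h2 : (Z ∩ X).card = m := by
          have := Finset.card_sdiff_add_card_inter Z X
          omega
        have : Z ∩ X = X := Finset.eq_of_subset_of_card_le Finset.inter_subset_right
          (by rw [h2, hXc])
        intro a ha; rw [← this] at ha; exact Finset.mem_of_mem_inter_left ha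
      have : Z = insert v X := by
        ext a
        constructor
        · intro ha
          by_cases haX : a ∈ X
          · exact Finset.mem_insert_of_mem haX
          · have : a ∈ Z \ X := Finset.mem_sdiff.mpr ⟨ha, haX⟩
            rw [hZX] at this
            simp only [Finset.mem_singleton] at this
            simp [this]
        · intro ha
          rcases Finset.mem_insert.mp ha with rfl | ha
          exacts [hvZ, hXZ ha]
      rwa [← this]
    · -- pick w ∈ Z \ X with w ≠ v
      have hvZX : v ∈ Z \ X := Finset.mem_sdiff.mpr ⟨hvZ, hvX⟩
      have : ∃ w ∈ Z \ X, w ≠ v := by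
        by_contra habs
        push_neg at habs
        exact hZX (Finset.eq_singleton_iff_unique_mem.mpr ⟨hvZX, habs⟩)
      obtain ⟨w, hwZX, hwv⟩ := this
      obtain ⟨hwZ, hwX⟩ := Finset.mem_sdiff.mp hwZX
      have hwmem : w ∈ Z ∆ X := Finset.mem_symmDiff.mpr (Or.inl ⟨hwZ, hwX⟩)
      obtain ⟨w₂, hw₂, hZ'⟩ := hD.2 Z hZ X hX w hwmem
      by_cases hw₂Z : w₂ ∈ Z
      · exfalso
        by_cases hww : w₂ = w
        · -- Z' = Z.erase w, card m, contains v
          have : Z ∆ {w, w₂} = Z.erase w := by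
            subst hww
            have : ({w₂, w₂} : Finset V) = {w₂} := by simp
            rw [this]
            ext a
            by_cases haw : a = w₂ <;> simp [Finset.mem_symmDiff, haw, hwZ]
          rw [this] at hZ'
          have := hlb2 _ hZ' (Finset.mem_erase.mpr ⟨Ne.symm hwv, hvZ⟩)
          have := Finset.card_erase_add_one hwZ
          omega
        · -- Z' = (Z.erase w).erase w₂, card m - 1
          have : Z ∆ {w, w₂} = (Z.erase w).erase w₂ := by
            ext a
            by_cases h1 : a = w <;> by_cases h2 : a = w₂ <;>
              simp [Finset.mem_symmDiff, h1, h2, hwZ, hw₂Z, hww] <;> tauto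
          rw [this] at hZ'
          have h1 := hlb _ hZ'
          have h2 : w₂ ∈ Z.erase w := Finset.mem_erase.mpr ⟨hww, hw₂Z⟩
          have := Finset.card_erase_add_one h2
          have := Finset.card_erase_add_one hwZ
          omega
      · -- w₂ ∈ X \ Z, new set Z' closer to X
        have hw₂X : w₂ ∈ X := by
          rcases Finset.mem_symmDiff.mp hw₂ with ⟨h1, h2⟩ | ⟨h1, h2⟩
          · exact absurd h1 hw₂Z
          · exact h1
        have hww : w₂ ≠ w := fun h => hw₂Z (h ▸ hwZ)
        have hZ'eq : Z ∆ {w, w₂} = insert w₂ (Z.erase w) := by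
          ext a
          by_cases h1 : a = w <;> by_cases h2 : a = w₂ <;>
            simp [Finset.mem_symmDiff, h1, h2, hwZ, hw₂Z, hww] <;> tauto
        have hvZ' : v ∈ Z ∆ {w, w₂} := by
          rw [hZ'eq]
          exact Finset.mem_insert_of_mem (Finset.mem_erase.mpr ⟨Ne.symm hwv, hvZ⟩)
        have hZ'c : (Z ∆ {w, w₂}).card = m + 1 := by
          rw [hZ'eq]
          rw [Finset.card_insert_of_notMem (fun h => hw₂Z (Finset.mem_of_mem_erase h))]
          rw [Finset.card_erase_of_mem hwZ, hZc]
          omega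
        have hpair : ({w, w₂} : Finset V) ⊆ X ∆ Z := by
          intro a ha
          simp only [Finset.mem_insert, Finset.mem_singleton] at ha
          rcases ha with rfl | rfl
          · exact Finset.mem_symmDiff.mpr (Or.inr ⟨hwZ, hwX⟩)
          · exact Finset.mem_symmDiff.mpr (Or.inl ⟨hw₂X, hw₂Z⟩)
        have heq : X ∆ (Z ∆ {w, w₂}) = (X ∆ Z) \ {w, w₂} := by
          rw [← symmDiff_assoc, symmDiff_sdiff_of_subset hpair]
        have hlt : (X ∆ (Z ∆ {w, w₂})).card < n := by
          rw [heq, ← hn]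
          apply Finset.card_lt_card
          refine ⟨Finset.sdiff_subset, fun habs => ?_⟩
          have := habs (hpair (Finset.mem_insert_self w {w₂}))
          simp at this
        exact ih _ hlt (Z ∆ {w, w₂}) hZ' hvZ' hZ'c X hX hXc rfl

lemma mem_pivot_erase {D : Set (Finset V)} {v : V} {Y : Finset V} (h : v ∈ Y) :
    Y ∈ pivotSS D {v} ↔ Y.erase v ∈ D := by
  rw [mem_pivot, symmDiff_singleton_of_mem_s11 h]

lemma mem_pivot_insert {D : Set (Finset V)} {v : V} {Y : Finset V} (h : v ∉ Y) :
    Y ∈ pivotSS D {v} ↔ insert v Y ∈ D := by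
  rw [mem_pivot, symmDiff_singleton_of_not_mem h]

lemma minFam_eq {D : Set (Finset V)} (hD : DeltaMatroid D) :
    minFam D = {X ∈ D | X.card = dSS D ∅} := by
  obtain ⟨X₀, hX₀, hX₀c⟩ := exists_dSS hD.1
  ext X
  constructor
  · intro hX
    refine ⟨hX.1, le_antisymm ?_ (dSS_le_s11 hX.1)⟩
    rw [← hX₀c]; exact minFam_card_le hD X hX X₀ hX₀
  · rintro ⟨hX, hXc⟩
    refine ⟨hX, fun Y hY hsub => ?_⟩
    exact Finset.eq_of_subset_of_card_le hsub (by rw [hXc]; exact dSS_le_s11 hY)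

lemma minCardFam_eq {D : Set (Finset V)} (h : D.Nonempty) :
    minCardFam D = {X ∈ D | X.card = dSS D ∅} := by
  obtain ⟨X₀, hX₀, hX₀c⟩ := exists_dSS h
  ext X
  constructor
  · intro hX
    refine ⟨hX.1, le_antisymm ?_ (dSS_le_s11 hX.1)⟩
    rw [← hX₀c]; exact hX.2 X₀ hX₀
  · rintro ⟨hX, hXc⟩
    exact ⟨hX, fun Y hY => by rw [hXc]; exact dSS_le_s11 hY⟩


/-- among the three equicardinal families `min(M)`, `min(M*v)`,
`min_card(M∂v)` of a delta-matroid `M`, precisely two are equal (to `M1`); the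
third (`M2`) consists of sets of cardinality one larger, and its
pseudo-contraction on `v` equals `M1`.  In particular, among `d_M`, `d_{M*v}`,
`d_{M∂v}` precisely two equal some `m` and the third equals `m+1`. -/
theorem min_mi_mi_plus_one (D : Set (Finset V)) (hDM : DeltaMatroid D) (v : V) :
    ∃ M1 M2 : Set (Finset V),
      ((minFam D = M1 ∧ minFam (pivotSS D {v}) = M1 ∧ minCardFam (dpSS D v) = M2) ∨
       (minFam D = M1 ∧ minCardFam (dpSS D v) = M1 ∧ minFam (pivotSS D {v}) = M2) ∨
       (minFam (pivotSS D {v}) = M1 ∧ minCardFam (dpSS D v) = M1 ∧ minFam D = M2)) ∧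
      M1 ≠ M2 ∧
      Equicardinal M1 ∧ Equicardinal M2 ∧
      (∀ Y ∈ M2, ∀ Z ∈ M1, Y.card = Z.card + 1) ∧
      ((fun Y => Y \ {v}) '' {Y ∈ M2 | v ∈ Y}) = M1 ∧
      (∃ m : ℕ,
        (dSS D ∅ = m ∧ dSS (pivotSS D {v}) ∅ = m ∧ dSS (dpSS D v) ∅ = m + 1) ∨
        (dSS D ∅ = m ∧ dSS (dpSS D v) ∅ = m ∧ dSS (pivotSS D {v}) ∅ = m + 1) ∨
        (dSS (pivotSS D {v}) ∅ = m ∧ dSS (dpSS D v) ∅ = m ∧ dSS D ∅ = m + 1)) := by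
  classical
  have hPD : DeltaMatroid (pivotSS D {v}) := pivot_deltaMatroid hDM {v}
  set P := pivotSS D {v} with hPdef
  set L := dpSS D v with hLdef
  set m := dSS D ∅ with hmdef
  set p := dSS P ∅ with hpdef
  obtain ⟨X₀, hX₀, hX₀c⟩ := exists_dSS hDM.1
  obtain ⟨Y₁, hY₁, hY₁c⟩ := exists_dSS hPD.1
  rw [← hmdef] at hX₀c
  rw [← hpdef] at hY₁c
  have hlbD : ∀ W ∈ D, m ≤ W.card := fun W hW => dSS_le_s11 hW
  have hlbP : ∀ W ∈ P, p ≤ W.card := fun W hW => dSS_le_s11 hW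
  -- generic: cardinality across the pivot
  have hDtoP : ∀ W ∈ D, v ∈ W → W.erase v ∈ P := by
    intro W hW hv
    exact (mem_pivot_insert (Finset.notMem_erase v W)).mpr
      (by rwa [Finset.insert_erase hv])
  have hlbPD : ∀ Y ∈ P, m ≤ Y.card + 1 := by
    intro Y hY
    by_cases hv : v ∈ Y
    · have h1 := hlbD _ ((mem_pivot_erase hv).mp hY)
      have h2 := Finset.card_erase_add_one hv
      omega
    · have h1 := hlbD _ ((mem_pivot_insert hv).mp hY)
      have h2 := Finset.card_insert_of_notMem hv
      omega
  have hlbDP : ∀ W ∈ D, p ≤ W.card + 1 := by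
    intro W hW
    by_cases hv : v ∈ W
    · have h1 := hlbP _ (hDtoP W hW hv)
      have h2 := Finset.card_erase_add_one hv
      omega
    · have hmem : insert v W ∈ P := (mem_pivot_erase (Finset.mem_insert_self v W)).mpr
        (by rwa [Finset.erase_insert hv])
      have h1 := hlbP _ hmem
      have h2 := Finset.card_insert_of_notMem hv
      omega
  rcases lt_trichotomy p m with hcase | hcase | hcase
  · -- Case III : p = m - 1
    have hpm : p + 1 = m := by have := hlbPD Y₁ hY₁; omega
    have hY₁v : v ∉ Y₁ := by
      intro hv
      have h1 := hlbD _ ((mem_pivot_erase hv).mp hY₁)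
      have h2 := Finset.card_erase_add_one hv
      omega
    have hZ₀ : insert v Y₁ ∈ D := (mem_pivot_insert hY₁v).mp hY₁
    set M1 : Set (Finset V) := {Y : Finset V | v ∉ Y ∧ insert v Y ∈ D ∧ Y.card + 1 = m}
      with hM1def
    set M2 : Set (Finset V) := {X ∈ D | X.card = m} with hM2def
    have hM1P : minFam P = M1 := by
      rw [minFam_eq hPD]
      ext Y
      simp only [hM1def, Set.mem_setOf_eq]
      constructor
      · rintro ⟨hY, hYc⟩
        rw [← hpdef] at hYc
        have hv : v ∉ Y := by
          intro hv
          have h1 := hlbD _ ((mem_pivot_erase hv).mp hY)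
          have h2 := Finset.card_erase_add_one hv
          omega
        exact ⟨hv, (mem_pivot_insert hv).mp hY, by omega⟩
      · rintro ⟨hv, hins, hc⟩
        have hYP : Y ∈ P := (mem_pivot_insert hv).mpr hins
        have := hlbP _ hYP
        exact ⟨hYP, by rw [← hpdef]; omega⟩
    have hY₁L : Y₁ ∈ L := by
      refine (mem_dp_of_notMem hY₁v).mpr (Or.inr ⟨fun h => ?_, hZ₀⟩)
      have := hlbD _ h
      omega
    have hlbL : ∀ Y ∈ L, p ≤ Y.card := by
      intro Y hY
      by_cases hv : v ∈ Y
      · have := hlbD _ ((mem_dp_of_mem hv).mp hY); omega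
      · rcases (mem_dp_of_notMem hv).mp hY with ⟨h1, _⟩ | ⟨_, h2⟩
        · have := hlbD _ h1; omega
        · have h3 := hlbD _ h2
          have h4 := Finset.card_insert_of_notMem hv
          omega
    have hdL : dSS L ∅ = p := dSS_eq hY₁L hY₁c hlbL
    have hM1L : minCardFam L = M1 := by
      rw [minCardFam_eq ⟨Y₁, hY₁L⟩, hdL]
      ext Y
      simp only [hM1def, Set.mem_setOf_eq]
      constructor
      · rintro ⟨hY, hYc⟩
        have hYD : Y ∉ D := fun h => by have := hlbD _ h; omega
        by_cases hv : v ∈ Y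
        · exact absurd ((mem_dp_of_mem hv).mp hY) hYD
        · rcases (mem_dp_of_notMem hv).mp hY with ⟨h1, _⟩ | ⟨_, h2⟩
          · exact absurd h1 hYD
          · exact ⟨hv, h2, by omega⟩
      · rintro ⟨hv, hins, hc⟩
        have hYD : Y ∉ D := fun h => by have := hlbD _ h; omega
        exact ⟨(mem_dp_of_notMem hv).mpr (Or.inr ⟨hYD, hins⟩), by omega⟩
    have hM2D : minFam D = M2 := by
      rw [minFam_eq hDM, hM2def, hmdef]
    refine ⟨M1, M2, Or.inr (Or.inr ⟨hM1P, hM1L, hM2D⟩), ?_, ?_, ?_, ?_, ?_, ⟨p, Or.inr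
      (Or.inr ⟨hpdef.symm, hdL, by omega⟩)⟩⟩
    · intro h
      have hY₁M1 : Y₁ ∈ M1 := ⟨hY₁v, hZ₀, by omega⟩
      rw [h, hM2def] at hY₁M1
      have := hlbD _ hY₁M1.1
      omega
    · rintro X ⟨_, _, hX⟩ Y ⟨_, _, hY⟩
      omega
    · rintro X ⟨_, hX⟩ Y ⟨_, hY⟩
      omega
    · rintro Y ⟨_, hY⟩ Z ⟨_, _, hZ⟩
      omega
    · ext Y
      simp only [hM1def, hM2def, Set.mem_image, Set.mem_setOf_eq]
      constructor
      · rintro ⟨Z, ⟨⟨hZD, hZc⟩, hvZ⟩, rfl⟩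
        rw [← Finset.erase_eq]
        refine ⟨Finset.notMem_erase v Z, ?_, ?_⟩
        · rwa [Finset.insert_erase hvZ]
        · rw [Finset.card_erase_add_one hvZ]
          exact hZc
      · rintro ⟨hv, hins, hc⟩
        refine ⟨insert v Y, ⟨⟨hins, ?_⟩, Finset.mem_insert_self v Y⟩, ?_⟩
        · rw [Finset.card_insert_of_notMem hv]
          exact hc
        · rw [← Finset.erase_eq, Finset.erase_insert hv]
  · -- Case II : p = m
    have hlb2 : ∀ W ∈ D, v ∈ W → m + 1 ≤ W.card := by
      intro W hW hv
      have h1 := hlbP _ (hDtoP W hW hv)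
      have h2 := Finset.card_erase_add_one hv
      omega
    have hvX₀ : v ∉ X₀ := fun hv => by have := hlb2 X₀ hX₀ hv; omega
    have hY₁v : v ∉ Y₁ := by
      intro hv
      have h1 := hlbD _ ((mem_pivot_erase hv).mp hY₁)
      have h2 := Finset.card_erase_add_one hv
      omega
    have hZ₀D : insert v Y₁ ∈ D := (mem_pivot_insert hY₁v).mp hY₁
    have hZ₀c : (insert v Y₁).card = m + 1 := by
      rw [Finset.card_insert_of_notMem hY₁v]; omega
    have keyD : ∀ X ∈ D, X.card = m → insert v X ∈ D := by
      intro X hX hXc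
      exact key_insert hDM hlbD hlb2 _ (insert v Y₁) hZ₀D (Finset.mem_insert_self v Y₁)
        hZ₀c X hX hXc rfl
    have hlbP' : ∀ W ∈ P, m ≤ W.card := by intro W hW; have := hlbP _ hW; omega
    have hlb2P : ∀ W ∈ P, v ∈ W → m + 1 ≤ W.card := by
      intro W hW hv
      have h1 := hlbD _ ((mem_pivot_erase hv).mp hW)
      have h2 := Finset.card_erase_add_one hv
      omega
    have hX₀P : insert v X₀ ∈ P := (mem_pivot_erase (Finset.mem_insert_self v X₀)).mpr
      (by rwa [Finset.erase_insert hvX₀])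
    have hX₀Pc : (insert v X₀).card = m + 1 := by
      rw [Finset.card_insert_of_notMem hvX₀]; omega
    have keyP : ∀ Y ∈ P, Y.card = m → insert v Y ∈ P := by
      intro Y hY hYc
      exact key_insert hPD hlbP' hlb2P _ (insert v X₀) hX₀P (Finset.mem_insert_self v X₀)
        hX₀Pc Y hY hYc rfl
    have eraseD : ∀ Z ∈ D, v ∈ Z → Z.card = m + 1 → Z.erase v ∈ D := by
      intro Z hZ hv hZc
      have h1 : Z.erase v ∈ P := hDtoP Z hZ hv
      have h2 : (Z.erase v).card = m := by have := Finset.card_erase_add_one hv; omega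
      have h3 := keyP _ h1 h2
      rw [Finset.insert_erase hv] at h3
      exact (mem_pivot_erase hv).mp h3
    set M1 : Set (Finset V) := {X ∈ D | X.card = m} with hM1def
    set M2 : Set (Finset V) := {Y ∈ L | Y.card = m + 1} with hM2def
    have hM1D : minFam D = M1 := by rw [minFam_eq hDM, hM1def, hmdef]
    have hM1P : minFam P = M1 := by
      rw [minFam_eq hPD, hM1def]
      ext Y
      simp only [Set.mem_setOf_eq]
      constructor
      · rintro ⟨hY, hYc⟩
        rw [← hpdef] at hYc
        have hv : v ∉ Y := fun hv => by have := hlb2P _ hY hv; omega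
        have hins : insert v Y ∈ D := (mem_pivot_insert hv).mp hY
        have hinsc : (insert v Y).card = m + 1 := by
          rw [Finset.card_insert_of_notMem hv]; omega
        have h5 := eraseD _ hins (Finset.mem_insert_self v Y) hinsc
        rw [Finset.erase_insert hv] at h5
        exact ⟨h5, by omega⟩
      · rintro ⟨hY, hYc⟩
        have hv : v ∉ Y := fun hv => by have := hlb2 _ hY hv; omega
        exact ⟨(mem_pivot_insert hv).mpr (keyD _ hY hYc), by rw [← hpdef]; omega⟩
    have hZ₀L : insert v Y₁ ∈ L :=
      (mem_dp_of_mem (Finset.mem_insert_self v Y₁)).mpr hZ₀D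
    have hlbL : ∀ Y ∈ L, m + 1 ≤ Y.card := by
      intro Y hY
      by_cases hv : v ∈ Y
      · exact hlb2 _ ((mem_dp_of_mem hv).mp hY) hv
      · rcases (mem_dp_of_notMem hv).mp hY with ⟨h1, h2⟩ | ⟨h1, h2⟩
        · have h3 := hlbD _ h1
          rcases Nat.lt_or_ge m Y.card with h | h
          · omega
          · exact absurd (keyD _ h1 (by omega)) h2
        · have h3 := hlb2 _ h2 (Finset.mem_insert_self v Y)
          have h4 := Finset.card_insert_of_notMem hv
          rcases Nat.lt_or_ge m Y.card with h | h
          · omega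
          · exfalso
            have h5 : (insert v Y).card = m + 1 := by omega
            have h6 := eraseD _ h2 (Finset.mem_insert_self v Y) h5
            rw [Finset.erase_insert hv] at h6
            exact h1 h6
    have hdL : dSS L ∅ = m + 1 := dSS_eq hZ₀L hZ₀c hlbL
    have hM2L : minCardFam L = M2 := by rw [minCardFam_eq ⟨_, hZ₀L⟩, hdL, hM2def]
    refine ⟨M1, M2, Or.inl ⟨hM1D, hM1P, hM2L⟩, ?_, ?_, ?_, ?_, ?_,
      ⟨m, Or.inl ⟨hmdef.symm, by omega, hdL⟩⟩⟩
    · intro h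
      have hmem : X₀ ∈ M1 := ⟨hX₀, hX₀c⟩
      rw [h, hM2def] at hmem
      have h2 := hmem.2
      omega
    · rintro X ⟨_, hX⟩ Y ⟨_, hY⟩; omega
    · rintro X ⟨_, hX⟩ Y ⟨_, hY⟩; omega
    · rintro Y ⟨_, hY⟩ Z ⟨_, hZ⟩; omega
    · ext Y
      simp only [hM1def, hM2def, Set.mem_image, Set.mem_setOf_eq]
      constructor
      · rintro ⟨Z, ⟨⟨hZL, hZc⟩, hvZ⟩, rfl⟩
        have hZD : Z ∈ D := (mem_dp_of_mem hvZ).mp hZL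
        rw [← Finset.erase_eq]
        refine ⟨eraseD _ hZD hvZ hZc, ?_⟩
        have := Finset.card_erase_add_one hvZ
        omega
      · rintro ⟨hY, hYc⟩
        have hv : v ∉ Y := fun hv => by have := hlb2 _ hY hv; omega
        have hins := keyD _ hY hYc
        refine ⟨insert v Y, ⟨⟨(mem_dp_of_mem (Finset.mem_insert_self v Y)).mpr hins, ?_⟩,
          Finset.mem_insert_self v Y⟩, ?_⟩
        · rw [Finset.card_insert_of_notMem hv]; omega
        · rw [← Finset.erase_eq, Finset.erase_insert hv]
  · -- Case I : p = m + 1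
    have hFI : ∀ W ∈ D, v ∈ W → m + 2 ≤ W.card := by
      intro W hW hv
      have h1 := hlbP _ (hDtoP W hW hv)
      have h2 := Finset.card_erase_add_one hv
      omega
    have hvX₀ : v ∉ X₀ := fun hv => by have := hFI X₀ hX₀ hv; omega
    have hX₀P : insert v X₀ ∈ P := (mem_pivot_erase (Finset.mem_insert_self v X₀)).mpr
      (by rwa [Finset.erase_insert hvX₀])
    have hpm : p = m + 1 := by
      have h1 := hlbP _ hX₀P
      have h2 := Finset.card_insert_of_notMem hvX₀
      omega
    set M1 : Set (Finset V) := {X ∈ D | X.card = m} with hM1def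
    set M2 : Set (Finset V) := {Y ∈ P | Y.card = m + 1} with hM2def
    have hM1D : minFam D = M1 := by rw [minFam_eq hDM, hM1def, hmdef]
    have hM2P : minFam P = M2 := by rw [minFam_eq hPD, hM2def, ← hpm, hpdef]
    have hX₀L : X₀ ∈ L := by
      refine (mem_dp_of_notMem hvX₀).mpr (Or.inl ⟨hX₀, fun h => ?_⟩)
      have h1 := hFI _ h (Finset.mem_insert_self v X₀)
      have h2 := Finset.card_insert_of_notMem hvX₀
      omega
    have hlbL : ∀ Y ∈ L, m ≤ Y.card := by
      intro Y hY
      by_cases hv : v ∈ Y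
      · exact hlbD _ ((mem_dp_of_mem hv).mp hY)
      · rcases (mem_dp_of_notMem hv).mp hY with ⟨h1, _⟩ | ⟨_, h2⟩
        · exact hlbD _ h1
        · have h3 := hFI _ h2 (Finset.mem_insert_self v Y)
          have h4 := Finset.card_insert_of_notMem hv
          omega
    have hdL : dSS L ∅ = m := dSS_eq hX₀L hX₀c hlbL
    have hM1L : minCardFam L = M1 := by
      rw [minCardFam_eq ⟨X₀, hX₀L⟩, hdL, hM1def]
      ext Y
      simp only [Set.mem_setOf_eq]
      constructor
      · rintro ⟨hY, hYc⟩
        refine ⟨?_, hYc⟩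
        by_cases hv : v ∈ Y
        · exact (mem_dp_of_mem hv).mp hY
        · rcases (mem_dp_of_notMem hv).mp hY with ⟨h1, _⟩ | ⟨_, h2⟩
          · exact h1
          · exfalso
            have h3 := hFI _ h2 (Finset.mem_insert_self v Y)
            have h4 := Finset.card_insert_of_notMem hv
            omega
      · rintro ⟨hY, hYc⟩
        have hv : v ∉ Y := fun hv => by have := hFI _ hY hv; omega
        refine ⟨(mem_dp_of_notMem hv).mpr (Or.inl ⟨hY, fun h => ?_⟩), hYc⟩
        have h1 := hFI _ h (Finset.mem_insert_self v Y)
        have h2 := Finset.card_insert_of_notMem hv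
        omega
    refine ⟨M1, M2, Or.inr (Or.inl ⟨hM1D, hM1L, hM2P⟩), ?_, ?_, ?_, ?_, ?_,
      ⟨m, Or.inr (Or.inl ⟨hmdef.symm, hdL, by omega⟩)⟩⟩
    · intro h
      have hmem : X₀ ∈ M1 := ⟨hX₀, hX₀c⟩
      rw [h, hM2def] at hmem
      have h2 := hmem.2
      omega
    · rintro X ⟨_, hX⟩ Y ⟨_, hY⟩; omega
    · rintro X ⟨_, hX⟩ Y ⟨_, hY⟩; omega
    · rintro Y ⟨_, hY⟩ Z ⟨_, hZ⟩; omega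
    · ext Y
      simp only [hM1def, hM2def, Set.mem_image, Set.mem_setOf_eq]
      constructor
      · rintro ⟨Z, ⟨⟨hZP, hZc⟩, hvZ⟩, rfl⟩
        rw [← Finset.erase_eq]
        refine ⟨(mem_pivot_erase hvZ).mp hZP, ?_⟩
        have := Finset.card_erase_add_one hvZ
        omega
      · rintro ⟨hY, hYc⟩
        have hv : v ∉ Y := fun hv => by have := hFI _ hY hv; omega
        refine ⟨insert v Y, ⟨⟨?_, ?_⟩, Finset.mem_insert_self v Y⟩, ?_⟩
        · exact (mem_pivot_erase (Finset.mem_insert_self v Y)).mpr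
            (by rwa [Finset.erase_insert hv])
        · rw [Finset.card_insert_of_notMem hv]
          omega
        · rw [← Finset.erase_eq, Finset.erase_insert hv]
end

section
/- Let M = (V, D) be a delta-matroid and v ∈ V. Consider the three equicardinal families max(M), max(M*v), and max_card(M+v). Precisely two of these three families are equal, say both equal to M1, and the third family M2 satisfies: every set of M2 has cardinality exactly one smaller than every set of M1, and the pseudo-deletion of M2 on v equals M1, i.e., (V, {Y ∪ {v} : Y ∈ M2, v ∉ Y}) = M1. -/
open scoped symmDiff

variable {V : Type*} [DecidableEq V] [Fintype V]

/-! In a delta-matroid every inclusion-maximal set has the maximum cardinality `r`: a larger set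
closest to a maximal one could be moved closer by an exchange without shrinking. This applies to
the pivot `D * v` as well, so all three families are top slices, and everything depends on how
high the sets avoiding `v` reach.

* Some top set avoids `v`: adding `v` to those gives the top slice, of size `r + 1`, of both
  `D * v` and `D + v`.
* They reach `r - 1`: exchange in `D` and in `D * v` shows that the top slice of `D` is exactly
  the pseudo-deletion of its slice `r - 1`. Then `D * v` has the same top slice, while the two
  cancel in `D + v = D ∆ pseudoDeletion D v`, whose top slice is its slice `r - 1`.
* They stay below `r - 1`: `D + v` keeps the top slice of `D`, and the top slice of `D * v` is
  its slice `r - 1`, whose sets avoiding `v` are the sets `X \ {v}` with `X` on top of `D`.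
-/

section SetSystem

variable {α : Type*} {D : Set (Finset α)} {W : Finset α} {k : ℕ}

def sliceSS (D : Set (Finset α)) (k : ℕ) : Set (Finset α) :=
  {Y ∈ D | Y.card = k}

@[simp]
theorem mem_sliceSS : W ∈ sliceSS D k ↔ W ∈ D ∧ W.card = k := Iff.rfl

theorem maxCardFam_eq_sliceSS (hle : ∀ Y ∈ D, Y.card ≤ k) (hne : (sliceSS D k).Nonempty) :
    maxCardFam D = sliceSS D k := by
  obtain ⟨X, hX, rfl⟩ := hne
  ext W
  exact ⟨fun hW => ⟨hW.1, le_antisymm (hle W hW.1) (hW.2 X hX)⟩,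
    fun hW => ⟨hW.1, fun Y hY => hW.2 ▸ hle Y hY⟩⟩

variable [DecidableEq α] {v : α}

def pseudoDeletion (D : Set (Finset α)) (v : α) : Set (Finset α) :=
  (fun Y => Y ∪ {v}) '' {Y ∈ D | v ∉ Y}

theorem mem_pseudoDeletion : W ∈ pseudoDeletion D v ↔ v ∈ W ∧ W.erase v ∈ D := by
  constructor
  · rintro ⟨Y, ⟨hY, hvY⟩, rfl⟩
    simpa [Finset.union_comm, ← Finset.insert_eq, hvY] using hY
  · rintro ⟨hvW, hW⟩
    refine ⟨W.erase v, ⟨hW, Finset.notMem_erase v W⟩, ?_⟩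
    show W.erase v ∪ {v} = W
    rw [Finset.union_comm, ← Finset.insert_eq, Finset.insert_erase hvW]

theorem insert_mem_pseudoDeletion (hW : W ∈ D) (hvW : v ∉ W) :
    insert v W ∈ pseudoDeletion D v :=
  mem_pseudoDeletion.2 ⟨Finset.mem_insert_self v W, by rwa [Finset.erase_insert hvW]⟩

theorem pseudoDeletion_sliceSS :
    pseudoDeletion (sliceSS D k) v = sliceSS (pseudoDeletion D v) (k + 1) := by
  ext W
  simp only [mem_pseudoDeletion, mem_sliceSS]
  by_cases hvW : v ∈ W
  · rw [← Finset.card_erase_add_one hvW, Nat.add_right_cancel_iff]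
    tauto
  · tauto

theorem Set.Nonempty.of_pseudoDeletion (h : (pseudoDeletion D v).Nonempty) : D.Nonempty :=
  h.of_image.mono (Set.sep_subset _ _)

theorem mem_pivotSS {X : Finset α} : W ∈ pivotSS D X ↔ W ∆ X ∈ D :=
  ⟨by rintro ⟨Y, hY, rfl⟩; rwa [symmDiff_symmDiff_cancel_right],
    fun h => ⟨W ∆ X, h, symmDiff_symmDiff_cancel_right _ _⟩⟩

theorem mem_pivotSS_singleton_of_mem (h : v ∈ W) : W ∈ pivotSS D {v} ↔ W.erase v ∈ D := by
  rw [mem_pivotSS, symmDiff_of_ge (Finset.singleton_subset_iff.2 h),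
    Finset.sdiff_singleton_eq_erase]

theorem mem_pivotSS_singleton_of_notMem (h : v ∉ W) :
    W ∈ pivotSS D {v} ↔ insert v W ∈ D := by
  rw [mem_pivotSS, (symmDiff_eq_sup _ _).2 (Finset.disjoint_singleton_right.2 h),
    Finset.sup_eq_union, Finset.union_comm, ← Finset.insert_eq]

theorem pseudoDeletion_subset_pivotSS_singleton : pseudoDeletion D v ⊆ pivotSS D {v} :=
  fun _ hW => (mem_pivotSS_singleton_of_mem (mem_pseudoDeletion.1 hW).1).2
    (mem_pseudoDeletion.1 hW).2

theorem lcSS_eq_symmDiff_pseudoDeletion : lcSS D v = D ∆ pseudoDeletion D v := rfl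

theorem mem_lcSS_of_notMem (h : v ∉ W) : W ∈ lcSS D v ↔ W ∈ D := by
  simp [lcSS_eq_symmDiff_pseudoDeletion, Set.mem_symmDiff, mem_pseudoDeletion, h]

theorem mem_lcSS_of_mem (h : v ∈ W) : W ∈ lcSS D v ↔ (W ∈ D ↔ W.erase v ∉ D) := by
  rw [lcSS_eq_symmDiff_pseudoDeletion, Set.mem_symmDiff, mem_pseudoDeletion]
  tauto

theorem pseudoDeletion_sliceSS_lcSS :
    pseudoDeletion (sliceSS (lcSS D v) k) v = pseudoDeletion (sliceSS D k) v := by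
  ext W
  simp only [mem_pseudoDeletion, mem_sliceSS, mem_lcSS_of_notMem (Finset.notMem_erase v W)]

theorem ne_and_equicardinal_of_pseudoDeletion_sliceSS_eq {F M : Set (Finset α)}
    (hM : pseudoDeletion (sliceSS F k) v = M) (hne : M.Nonempty) :
    M ≠ sliceSS F k ∧ Equicardinal M ∧ Equicardinal (sliceSS F k) ∧
      (∀ Y ∈ sliceSS F k, ∀ Z ∈ M, Y.card + 1 = Z.card) ∧
      pseudoDeletion (sliceSS F k) v = M := by
  rw [pseudoDeletion_sliceSS] at hM
  subst hM
  refine ⟨fun h => ?_, fun X hX Y hY => hX.2.trans hY.2.symm,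
    fun X hX Y hY => hX.2.trans hY.2.symm, fun Y hY Z hZ => by rw [hY.2, hZ.2],
    pseudoDeletion_sliceSS⟩
  obtain ⟨Z, hZ⟩ := hne
  have hZk : Z.card = k + 1 := hZ.2
  rw [h] at hZ
  have hZk' : Z.card = k := hZ.2
  omega

end SetSystem

section Bounds

variable {α : Type*} [DecidableEq α] {D : Set (Finset α)} {v : α} {k : ℕ}

theorem card_le_of_mem_pivotSS_singleton (hle : ∀ Y ∈ D, Y.card ≤ k + 1)
    (hout : ∀ Y ∈ D, v ∉ Y → Y.card + 1 ≤ k) : ∀ W ∈ pivotSS D {v}, W.card ≤ k := by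
  intro W hW
  by_cases hvW : v ∈ W
  · have := hout _ ((mem_pivotSS_singleton_of_mem hvW).1 hW) (Finset.notMem_erase v W)
    have := Finset.card_erase_add_one hvW
    omega
  · have := hle _ ((mem_pivotSS_singleton_of_notMem hvW).1 hW)
    rw [Finset.card_insert_of_notMem hvW] at this
    omega

theorem card_le_of_mem_lcSS (hle : ∀ Y ∈ D, Y.card ≤ k)
    (hout : ∀ Y ∈ D, v ∉ Y → Y.card + 1 ≤ k) : ∀ W ∈ lcSS D v, W.card ≤ k := by
  intro W hW
  rw [lcSS_eq_symmDiff_pseudoDeletion] at hW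
  rcases Set.symmDiff_subset_union hW with hWD | hWD
  · exact hle W hWD
  · rw [mem_pseudoDeletion] at hWD
    have := hout _ hWD.2 (Finset.notMem_erase v W)
    have := Finset.card_erase_add_one hWD.1
    omega

end Bounds

theorem Finset.card_le_card_symmDiff_pair {α : Type*} [DecidableEq α] {Y : Finset α} {u : α}
    (hu : u ∉ Y) (w : α) :
    Y.card ≤ (Y ∆ {u, w}).card := by
  calc Y.card ≤ (insert u (Y.erase w)).card := by
        rw [Finset.card_insert_of_notMem (fun h => hu (Finset.mem_of_mem_erase h))]
        exact Nat.le_succ_of_pred_le Finset.pred_card_le_card_erase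
    _ ≤ (Y ∆ {u, w}).card := Finset.card_le_card fun a ha => by
        simp only [Finset.mem_insert, Finset.mem_erase] at ha
        rcases ha with rfl | ⟨haw, haY⟩
        · simp [Finset.mem_symmDiff, hu]
        · simp [Finset.mem_symmDiff, haY, haw, show a ≠ u by rintro rfl; exact hu haY]

namespace DeltaMatroid

variable {α : Type*} [DecidableEq α] {D : Set (Finset α)}

theorem pivot_s12 (hD : DeltaMatroid D) (X : Finset α) : DeltaMatroid (pivotSS D X) := by
  have hdist : ∀ A B : Finset α, (A ∆ X) ∆ (B ∆ X) = A ∆ B := fun A B => by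
    rw [symmDiff_symmDiff_symmDiff_comm, symmDiff_self, symmDiff_bot]
  refine ⟨hD.1.image _, fun A hA B hB u hu => ?_⟩
  rw [mem_pivotSS] at hA hB
  obtain ⟨w, hw, hexch⟩ := hD.2 _ hA _ hB u (by rwa [hdist])
  refine ⟨w, by rwa [hdist] at hw, ?_⟩
  rwa [mem_pivotSS, symmDiff_right_comm]

theorem card_le_of_mem_maxFam (hD : DeltaMatroid D) {X Y : Finset α} (hX : X ∈ maxFam D)
    (hY : Y ∈ D) : Y.card ≤ X.card := by
  induction hn : (X ∆ Y).card using Nat.strong_induction_on generalizing Y with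
  | _ n ih =>
  by_cases hXY : X ⊆ Y
  · rw [hX.2 Y hY hXY]
  obtain ⟨u, huX, huY⟩ := Finset.not_subset.mp hXY
  obtain ⟨w, hw, hexch⟩ := hD.2 Y hY X hX.1 u (by simp [Finset.mem_symmDiff, huX, huY])
  have hpair : ({u, w} : Finset α) ⊆ Y ∆ X := Finset.insert_subset
    (by simp [Finset.mem_symmDiff, huX, huY]) (Finset.singleton_subset_iff.2 hw)
  have hcloser : (X ∆ (Y ∆ {u, w})).card < n := by
    rw [← symmDiff_assoc, symmDiff_comm X, symmDiff_of_ge hpair, ← hn, symmDiff_comm X]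
    exact Finset.card_lt_card (Finset.sdiff_ssubset hpair (Finset.insert_nonempty _ _))
  exact (Finset.card_le_card_symmDiff_pair huY w).trans (ih _ hcloser hexch rfl)

theorem maxFam_eq_maxCardFam (hD : DeltaMatroid D) : maxFam D = maxCardFam D := by
  ext X
  exact ⟨fun hX => ⟨hX.1, fun Y hY => hD.card_le_of_mem_maxFam hX hY⟩,
    fun hX => ⟨hX.1, fun Y hY hXY => (Finset.eq_of_subset_of_card_le hXY (hX.2 Y hY)).symm⟩⟩

theorem exists_maxCardFam_superset [Finite α] (hD : DeltaMatroid D) {Y : Finset α}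
    (hY : Y ∈ D) :
    ∃ W ∈ maxCardFam D, Y ⊆ W := by
  obtain ⟨W, hYW, hW⟩ := Finite.exists_le_maximal (p := (· ∈ D)) hY
  refine ⟨W, ?_, hYW⟩
  rw [← hD.maxFam_eq_maxCardFam]
  exact ⟨hW.1, fun Z hZ hWZ => le_antisymm (hW.2 hZ hWZ) hWZ⟩

variable [Finite α] {v : α} {s : ℕ}

theorem insert_mem_of_card_eq (hD : DeltaMatroid D) (hle : ∀ Y ∈ D, Y.card ≤ s + 1)
    (hout : ∀ Y ∈ D, v ∉ Y → Y.card ≤ s) (htop : (sliceSS D (s + 1)).Nonempty)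
    {Y : Finset α} (hY : Y ∈ D) (hvY : v ∉ Y) (hYs : Y.card = s) : insert v Y ∈ D := by
  obtain ⟨W, hW, hYW⟩ := hD.exists_maxCardFam_superset hY
  rw [maxCardFam_eq_sliceSS hle htop, mem_sliceSS] at hW
  have hvW : v ∈ W := by
    by_contra hvW
    have := hout W hW.1 hvW
    omega
  have hYW : insert v Y = W := Finset.eq_of_subset_of_card_le (Finset.insert_subset hvW hYW)
    (by rw [hW.2, Finset.card_insert_of_notMem hvY, hYs])
  exact hYW ▸ hW.1

-- Apply `insert_mem_of_card_eq` to `X \ {v}` in the pivot `pivotSS D {v}`, which satisfies the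
-- same hypotheses.
theorem erase_mem_of_card_eq (hD : DeltaMatroid D) (hle : ∀ Y ∈ D, Y.card ≤ s + 1)
    (hout : ∀ Y ∈ D, v ∉ Y → Y.card ≤ s)
    (hne : (sliceSS (pseudoDeletion D v) (s + 1)).Nonempty)
    {X : Finset α} (hX : X ∈ D) (hXs : X.card = s + 1) : X.erase v ∈ D := by
  have hvX : v ∈ X := by
    by_contra hvX
    have := hout X hX hvX
    omega
  have hle' : ∀ W ∈ pivotSS D {v}, W.card ≤ s + 1 := card_le_of_mem_pivotSS_singleton
    (fun Y hY => (hle Y hY).trans (Nat.le_succ _))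
    (fun Y hY hvY => Nat.succ_le_succ (hout Y hY hvY))
  have hout' : ∀ W ∈ pivotSS D {v}, v ∉ W → W.card ≤ s := fun W hW hvW => by
    have := hle _ ((mem_pivotSS_singleton_of_notMem hvW).1 hW)
    rw [Finset.card_insert_of_notMem hvW] at this
    omega
  have htop' : (sliceSS (pivotSS D {v}) (s + 1)).Nonempty :=
    hne.mono fun W hW => ⟨pseudoDeletion_subset_pivotSS_singleton hW.1, hW.2⟩
  have hXe : X.erase v ∈ pivotSS D {v} := by
    rwa [mem_pivotSS_singleton_of_notMem (Finset.notMem_erase v X), Finset.insert_erase hvX]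
  have hXpiv := (hD.pivot_s12 {v}).insert_mem_of_card_eq hle' hout' htop' hXe
    (Finset.notMem_erase v X) (by have := Finset.card_erase_add_one hvX; omega)
  rwa [Finset.insert_erase hvX, mem_pivotSS_singleton_of_mem hvX] at hXpiv

theorem sliceSS_eq_sliceSS_pseudoDeletion (hD : DeltaMatroid D)
    (hle : ∀ Y ∈ D, Y.card ≤ s + 1) (hout : ∀ Y ∈ D, v ∉ Y → Y.card ≤ s)
    (htop : (sliceSS D (s + 1)).Nonempty)
    (hne : (sliceSS (pseudoDeletion D v) (s + 1)).Nonempty) :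
    sliceSS D (s + 1) = sliceSS (pseudoDeletion D v) (s + 1) := by
  ext W
  rw [mem_sliceSS, mem_sliceSS, mem_pseudoDeletion]
  constructor
  · rintro ⟨hW, hWs⟩
    refine ⟨⟨?_, hD.erase_mem_of_card_eq hle hout hne hW hWs⟩, hWs⟩
    by_contra hvW
    have := hout W hW hvW
    omega
  · rintro ⟨⟨hvW, hWe⟩, hWs⟩
    have hW := hD.insert_mem_of_card_eq hle hout htop hWe (Finset.notMem_erase v W)
      (by have := Finset.card_erase_add_one hvW; omega)
    rw [Finset.insert_erase hvW] at hW
    exact ⟨hW, hWs⟩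

end DeltaMatroid

section TopAvoidsV

variable {α : Type*} [DecidableEq α] {D : Set (Finset α)} {v : α} {r : ℕ}

theorem sliceSS_pivotSS_singleton_of_card_le (hle : ∀ Y ∈ D, Y.card ≤ r) :
    sliceSS (pivotSS D {v}) (r + 1) = pseudoDeletion (sliceSS D r) v := by
  ext W
  rw [mem_sliceSS, mem_pseudoDeletion, mem_sliceSS]
  by_cases hvW : v ∈ W
  · rw [mem_pivotSS_singleton_of_mem hvW, ← Finset.card_erase_add_one hvW]
    simp [hvW]
  · rw [mem_pivotSS_singleton_of_notMem hvW]
    simp only [hvW, false_and, iff_false, not_and]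
    intro hW hWr
    have := hle _ hW
    rw [Finset.card_insert_of_notMem hvW] at this
    omega

theorem sliceSS_lcSS_of_card_le (hle : ∀ Y ∈ D, Y.card ≤ r) :
    sliceSS (lcSS D v) (r + 1) = pseudoDeletion (sliceSS D r) v := by
  rw [pseudoDeletion_sliceSS]
  ext W
  rw [mem_sliceSS, mem_sliceSS, lcSS_eq_symmDiff_pseudoDeletion, Set.mem_symmDiff]
  have : W.card = r + 1 → W ∉ D := fun hWr hW => by
    have := hle W hW
    omega
  tauto

theorem maxCardFam_pivotSS_singleton_of_card_le (hle : ∀ Y ∈ D, Y.card ≤ r)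
    (hne : (pseudoDeletion (sliceSS D r) v).Nonempty) :
    maxCardFam (pivotSS D {v}) = pseudoDeletion (sliceSS D r) v := by
  rw [← sliceSS_pivotSS_singleton_of_card_le hle] at hne ⊢
  refine maxCardFam_eq_sliceSS (card_le_of_mem_pivotSS_singleton ?_ ?_) hne
  · exact fun Y hY => (hle Y hY).trans (by omega)
  · exact fun Y hY _ => Nat.succ_le_succ (hle Y hY)

theorem maxCardFam_lcSS_of_card_le (hle : ∀ Y ∈ D, Y.card ≤ r)
    (hne : (pseudoDeletion (sliceSS D r) v).Nonempty) :
    maxCardFam (lcSS D v) = pseudoDeletion (sliceSS D r) v := by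
  rw [← sliceSS_lcSS_of_card_le hle] at hne ⊢
  refine maxCardFam_eq_sliceSS (card_le_of_mem_lcSS ?_ ?_) hne
  · exact fun Y hY => (hle Y hY).trans (Nat.le_succ r)
  · exact fun Y hY _ => Nat.succ_le_succ (hle Y hY)

end TopAvoidsV

section AvoidersOneBelowTop

variable {α : Type*} [DecidableEq α] {D : Set (Finset α)} {v : α} {s : ℕ}

theorem sliceSS_pivotSS_singleton_of_sliceSS_eq (hle : ∀ Y ∈ D, Y.card ≤ s + 1)
    (hslice : sliceSS D (s + 1) = sliceSS (pseudoDeletion D v) (s + 1)) :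
    sliceSS (pivotSS D {v}) (s + 1) = sliceSS D (s + 1) := by
  rw [hslice]
  ext W
  rw [mem_sliceSS, mem_sliceSS, mem_pseudoDeletion]
  by_cases hvW : v ∈ W
  · rw [mem_pivotSS_singleton_of_mem hvW]
    simp [hvW]
  · rw [mem_pivotSS_singleton_of_notMem hvW]
    simp only [hvW, false_and, iff_false, not_and]
    intro hW hWs
    have := hle _ hW
    rw [Finset.card_insert_of_notMem hvW] at this
    omega

theorem maxCardFam_pivotSS_singleton_of_sliceSS_eq (hle : ∀ Y ∈ D, Y.card ≤ s + 1)
    (hout : ∀ Y ∈ D, v ∉ Y → Y.card ≤ s) (htop : (sliceSS D (s + 1)).Nonempty)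
    (hslice : sliceSS D (s + 1) = sliceSS (pseudoDeletion D v) (s + 1)) :
    maxCardFam (pivotSS D {v}) = sliceSS D (s + 1) := by
  rw [← sliceSS_pivotSS_singleton_of_sliceSS_eq hle hslice] at htop ⊢
  refine maxCardFam_eq_sliceSS (card_le_of_mem_pivotSS_singleton ?_ ?_) htop
  · exact fun Y hY => (hle Y hY).trans (Nat.le_succ _)
  · exact fun Y hY hvY => Nat.succ_le_succ (hout Y hY hvY)

-- The top slices of `D` and of its pseudo-deletion cancel in `lcSS D v = D ∆ pseudoDeletion D v`.
theorem card_le_of_mem_lcSS_of_sliceSS_eq (hle : ∀ Y ∈ D, Y.card ≤ s + 1)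
    (hout : ∀ Y ∈ D, v ∉ Y → Y.card ≤ s)
    (hslice : sliceSS D (s + 1) = sliceSS (pseudoDeletion D v) (s + 1)) :
    ∀ W ∈ lcSS D v, W.card ≤ s := by
  intro W hW
  by_contra! hWs
  have hWs : W.card = s + 1 := le_antisymm
    (card_le_of_mem_lcSS hle (fun Y hY hvY => Nat.succ_le_succ (hout Y hY hvY)) W hW) hWs
  have hcancel := Set.ext_iff.1 hslice W
  rw [mem_sliceSS, mem_sliceSS] at hcancel
  rw [lcSS_eq_symmDiff_pseudoDeletion, Set.mem_symmDiff] at hW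
  tauto

theorem maxCardFam_lcSS_of_sliceSS_eq (hle : ∀ Y ∈ D, Y.card ≤ s + 1)
    (hout : ∀ Y ∈ D, v ∉ Y → Y.card ≤ s)
    (hne : (sliceSS (pseudoDeletion D v) (s + 1)).Nonempty)
    (hslice : sliceSS D (s + 1) = sliceSS (pseudoDeletion D v) (s + 1)) :
    maxCardFam (lcSS D v) = sliceSS (lcSS D v) s := by
  rw [← pseudoDeletion_sliceSS, ← pseudoDeletion_sliceSS_lcSS] at hne
  exact maxCardFam_eq_sliceSS (card_le_of_mem_lcSS_of_sliceSS_eq hle hout hslice)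
    hne.of_pseudoDeletion

end AvoidersOneBelowTop

section AvoidersFarBelowTop

variable {α : Type*} [DecidableEq α] {D : Set (Finset α)} {v : α} {s : ℕ}

theorem sliceSS_lcSS_of_card_add_one_le (hout : ∀ Y ∈ D, v ∉ Y → Y.card + 1 ≤ s) :
    sliceSS (lcSS D v) (s + 1) = sliceSS D (s + 1) := by
  ext W
  rw [mem_sliceSS, mem_sliceSS]
  by_cases hvW : v ∈ W
  · rw [mem_lcSS_of_mem hvW]
    have hcard := Finset.card_erase_add_one hvW
    have hWe : W.card = s + 1 → W.erase v ∉ D := fun hWs hWe => by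
      have := hout _ hWe (Finset.notMem_erase v W)
      omega
    tauto
  · rw [mem_lcSS_of_notMem hvW]

theorem pseudoDeletion_sliceSS_pivotSS_singleton
    (hout : ∀ Y ∈ D, v ∉ Y → Y.card + 1 ≤ s) :
    pseudoDeletion (sliceSS (pivotSS D {v}) s) v = sliceSS D (s + 1) := by
  ext W
  rw [mem_pseudoDeletion, mem_sliceSS, mem_sliceSS,
    mem_pivotSS_singleton_of_notMem (Finset.notMem_erase v W)]
  by_cases hvW : v ∈ W
  · rw [Finset.insert_erase hvW, ← Finset.card_erase_add_one hvW, Nat.add_right_cancel_iff]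
    simp only [hvW, true_and]
  · simp only [hvW, false_and, false_iff, not_and]
    intro hW hWs
    have := hout W hW hvW
    omega

theorem maxCardFam_lcSS_of_card_add_one_le (hle : ∀ Y ∈ D, Y.card ≤ s + 1)
    (hout : ∀ Y ∈ D, v ∉ Y → Y.card + 1 ≤ s) (htop : (sliceSS D (s + 1)).Nonempty) :
    maxCardFam (lcSS D v) = sliceSS D (s + 1) := by
  rw [← sliceSS_lcSS_of_card_add_one_le hout] at htop ⊢
  exact maxCardFam_eq_sliceSS
    (card_le_of_mem_lcSS hle fun Y hY hvY => (hout Y hY hvY).trans (Nat.le_succ s)) htop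

theorem maxCardFam_pivotSS_singleton_of_card_add_one_le (hle : ∀ Y ∈ D, Y.card ≤ s + 1)
    (hout : ∀ Y ∈ D, v ∉ Y → Y.card + 1 ≤ s) (htop : (sliceSS D (s + 1)).Nonempty) :
    maxCardFam (pivotSS D {v}) = sliceSS (pivotSS D {v}) s := by
  rw [← pseudoDeletion_sliceSS_pivotSS_singleton hout] at htop
  exact maxCardFam_eq_sliceSS (card_le_of_mem_pivotSS_singleton hle hout) htop.of_pseudoDeletion

end AvoidersFarBelowTop

/-- among the three equicardinal families `max(M)`, `max(M*v)`,
`max_card(M+v)` of a delta-matroid `M`, precisely two are equal (to `M1`); the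
third (`M2`) consists of sets of cardinality one smaller, and its
pseudo-deletion on `v` equals `M1`. -/
theorem max_mi_mi_minus_one (D : Set (Finset V)) (hDM : DeltaMatroid D) (v : V) :
    ∃ M1 M2 : Set (Finset V),
      ((maxFam D = M1 ∧ maxFam (pivotSS D {v}) = M1 ∧ maxCardFam (lcSS D v) = M2) ∨
       (maxFam D = M1 ∧ maxCardFam (lcSS D v) = M1 ∧ maxFam (pivotSS D {v}) = M2) ∨
       (maxFam (pivotSS D {v}) = M1 ∧ maxCardFam (lcSS D v) = M1 ∧ maxFam D = M2)) ∧
      M1 ≠ M2 ∧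
      Equicardinal M1 ∧ Equicardinal M2 ∧
      (∀ Y ∈ M2, ∀ Z ∈ M1, Y.card + 1 = Z.card) ∧
      ((fun Y => Y ∪ {v}) '' {Y ∈ M2 | v ∉ Y}) = M1 := by
  obtain ⟨X, hXD, hle⟩ := D.exists_max_image Finset.card D.toFinite hDM.1
  have htop : (sliceSS D X.card).Nonempty := ⟨X, hXD, rfl⟩
  rw [hDM.maxFam_eq_maxCardFam, (hDM.pivot_s12 {v}).maxFam_eq_maxCardFam,
    maxCardFam_eq_sliceSS hle htop]
  by_cases htop_avoids : (pseudoDeletion (sliceSS D X.card) v).Nonempty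
  · exact ⟨_, _, Or.inr (Or.inr ⟨maxCardFam_pivotSS_singleton_of_card_le hle htop_avoids,
      maxCardFam_lcSS_of_card_le hle htop_avoids, rfl⟩),
      ne_and_equicardinal_of_pseudoDeletion_sliceSS_eq rfl htop_avoids⟩
  have hvX : v ∈ X :=
    by_contra fun hvX => htop_avoids ⟨_, insert_mem_pseudoDeletion ⟨hXD, rfl⟩ hvX⟩
  obtain ⟨s, hs⟩ : ∃ s, X.card = s + 1 := ⟨_, (Finset.card_erase_add_one hvX).symm⟩
  rw [hs] at hle htop htop_avoids ⊢
  have hout : ∀ Y ∈ D, v ∉ Y → Y.card ≤ s := fun Y hY hvY =>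
    Nat.le_of_lt_succ ((hle Y hY).lt_of_ne fun hYs =>
      htop_avoids ⟨_, insert_mem_pseudoDeletion ⟨hY, hYs⟩ hvY⟩)
  by_cases hone_below : (sliceSS (pseudoDeletion D v) (s + 1)).Nonempty
  · have hslice := hDM.sliceSS_eq_sliceSS_pseudoDeletion hle hout htop hone_below
    exact ⟨_, _, Or.inl ⟨rfl, maxCardFam_pivotSS_singleton_of_sliceSS_eq hle hout htop hslice,
      maxCardFam_lcSS_of_sliceSS_eq hle hout hone_below hslice⟩,
      ne_and_equicardinal_of_pseudoDeletion_sliceSS_eq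
        (by rw [pseudoDeletion_sliceSS_lcSS, pseudoDeletion_sliceSS, hslice]) htop⟩
  have hout' : ∀ Y ∈ D, v ∉ Y → Y.card + 1 ≤ s := fun Y hY hvY =>
    (hout Y hY hvY).lt_of_ne fun hYs => hone_below ⟨_, insert_mem_pseudoDeletion hY hvY,
      by rw [Finset.card_insert_of_notMem hvY, hYs]⟩
  exact ⟨_, _, Or.inr (Or.inl ⟨rfl, maxCardFam_lcSS_of_card_add_one_le hle hout' htop,
    maxCardFam_pivotSS_singleton_of_card_add_one_le hle hout' htop⟩),
    ne_and_equicardinal_of_pseudoDeletion_sliceSS_eq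
      (pseudoDeletion_sliceSS_pivotSS_singleton hout') htop⟩
end

section
/- Let F be a field, V a finite set, and A a V × V matrix over F that is symmetric or skew-symmetric. Then for every X ⊆ V, d_{M_A}(X) = n(A[X]), i.e., the distance from X to the set system M_A equals the nullity of the principal submatrix A[X]. -/
open scoped symmDiff

variable {V : Type*} [DecidableEq V] [Fintype V]

/-!
By the principal rank property of symmetric and skew-symmetric matrices, some `Y ⊆ X` has `A[Y]`
nonsingular and `|Y| = rank A[X]`, so `d(X) ≤ |X| - rank A[X]`. Conversely, deleting a row or a
column lowers the rank by at most one, so a nonsingular `A[Z]` satisfies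
`|Z| = rank A[Z] ≤ rank A[Z ∩ X] + 2 |Z \ X| ≤ rank A[X] + 2 |Z \ X|`, which rearranges to
`|X| - rank A[X] ≤ |X ∆ Z|`.
-/

open Submodule Module

namespace Matrix

variable {m n m' n' F : Type*} [Field F]

lemma rank_submatrix_of_span_cols_eq (B : Matrix m n F) (f : m' → m) {Y X : Finset n}
    (h : span F (B.col '' Y) = span F (B.col '' X)) :
    (B.submatrix f ((↑) : Y → n)).rank = (B.submatrix f ((↑) : X → n)).rank := by
  have hcols : ∀ Z : Finset n,
      Set.range (B.submatrix f ((↑) : Z → n)).col =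
        LinearMap.funLeft F F f '' (B.col '' Z) := by
    intro Z
    rw [Set.image_image, Set.image_eq_range]
    rfl
  rw [rank_eq_finrank_span_cols, rank_eq_finrank_span_cols, hcols, hcols, span_image,
    span_image, h]

lemma rank_submatrix_rows_le_add [Fintype n] [DecidableEq m] (B : Matrix m n F) (Y Z : Finset m) :
    (B.submatrix ((↑) : Z → m) id).rank ≤
      (B.submatrix ((↑) : Y → m) id).rank + (Z \ Y).card := by
  classical
  have hrows : ∀ S : Finset m, Set.range (B.submatrix ((↑) : S → m) id).row = B.row '' S := by
    intro S
    rw [Set.image_eq_range]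
    rfl
  rw [rank_eq_finrank_span_row, rank_eq_finrank_span_row, hrows, hrows]
  calc finrank F (span F (B.row '' Z))
      ≤ finrank F ↥(span F (B.row '' Y) ⊔ span F ((Z \ Y).image B.row : Set (n → F))) := by
        apply Submodule.finrank_mono
        rw [← span_union, Finset.coe_image, ← Set.image_union]
        apply span_mono
        apply Set.image_mono
        rw [Finset.coe_sdiff, Set.union_sdiff_self]
        exact Set.subset_union_right
    _ ≤ _ := (finrank_add_le_finrank_add_finrank _ _).trans (by
        gcongr
        exact (finrank_span_finset_le_card _).trans Finset.card_image_le)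

lemma rank_submatrix_cols_le_add [Fintype m] [DecidableEq n] (B : Matrix m n F) (Y Z : Finset n) :
    (B.submatrix id ((↑) : Z → n)).rank ≤
      (B.submatrix id ((↑) : Y → n)).rank + (Z \ Y).card := by
  simpa only [← rank_transpose (B.submatrix _ _), transpose_submatrix] using
    Bᵀ.rank_submatrix_rows_le_add Y Z

lemma rank_submatrix_le_add_two_mul_card_sdiff [DecidableEq m] (A : Matrix m m F) (Y Z : Finset m) :
    (A.submatrix ((↑) : Z → m) ((↑) : Z → m)).rank ≤
      (A.submatrix ((↑) : Y → m) ((↑) : Y → m)).rank + 2 * (Z \ Y).card :=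
  calc (A.submatrix ((↑) : Z → m) ((↑) : Z → m)).rank
      ≤ (A.submatrix ((↑) : Y → m) ((↑) : Z → m)).rank + (Z \ Y).card :=
        (A.submatrix id ((↑) : Z → m)).rank_submatrix_rows_le_add Y Z
    _ ≤ (A.submatrix ((↑) : Y → m) ((↑) : Y → m)).rank + (Z \ Y).card + (Z \ Y).card := by
        gcongr
        exact (A.submatrix ((↑) : Y → m) id).rank_submatrix_cols_le_add Y Z
    _ = _ := by ring

lemma rank_neg {R : Type*} [CommRing R] [Fintype n] (M : Matrix m n R) : (-M).rank = M.rank := by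
  simpa using M.rank_smul_of_mem_nonZeroDivisors (isUnit_one.neg).mem_nonZeroDivisors

lemma rank_submatrix_comm {A : Matrix m m F} (hA : A.IsSymm ∨ Aᵀ = -A) [Fintype m'] [Fintype n']
    (f : m' → m) (g : n' → m) : (A.submatrix f g).rank = (A.submatrix g f).rank := by
  rw [← rank_transpose, transpose_submatrix]
  rcases hA with hA | hA
  · rw [hA.eq]
  · rw [hA]
    exact rank_neg (A.submatrix g f)

lemma det_ne_zero_of_rank_eq_card [Fintype m] [DecidableEq m] {M : Matrix m m F}
    (h : M.rank = Fintype.card m) : M.det ≠ 0 := by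
  have hrows : LinearIndependent F M.row :=
    linearIndependent_iff_card_eq_finrank_span.2 (by rw [← h, rank_eq_finrank_span_row]; rfl)
  exact ((isUnit_iff_isUnit_det M).1 (linearIndependent_rows_iff_isUnit.1 hrows)).ne_zero

/-- Take `Y ⊆ X` indexing a basis of the column space of `A[X]`. By (skew-)symmetry the rows
in `Y` span the row space as well, so `A[Y]` has the same rank as `A[X]`, namely `|Y|`. -/
theorem exists_subset_card_eq_rank_det_ne_zero [DecidableEq m] {A : Matrix m m F}
    (hA : A.IsSymm ∨ Aᵀ = -A) (X : Finset m) :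
    ∃ Y ⊆ X, Y.card = (A.submatrix ((↑) : X → m) ((↑) : X → m)).rank ∧
      (A.submatrix ((↑) : Y → m) ((↑) : Y → m)).det ≠ 0 := by
  set B : Matrix X m F := A.submatrix (↑) id
  obtain ⟨b, hbX, -, hXb, hb⟩ := exists_linearIndepOn_extension (v := B.col)
    (linearIndepOn_empty F _) (Set.empty_subset (X : Set m))
  obtain ⟨Y, rfl⟩ := (X.finite_toSet.subset hbX).exists_finset_coe
  have hYX : Y ⊆ X := Finset.coe_subset.1 hbX
  have hspan : span F (B.col '' Y) = span F (B.col '' X) :=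
    le_antisymm (span_mono (Set.image_mono hbX)) (span_le.2 hXb)
  have hcard : (B.submatrix id ((↑) : Y → m)).rank = Y.card := by
    rw [rank_eq_finrank_span_cols, ← Fintype.card_coe Y]
    exact finrank_span_eq_card hb
  have hXY : (A.submatrix ((↑) : X → m) ((↑) : Y → m)).rank =
      (A.submatrix ((↑) : X → m) ((↑) : X → m)).rank :=
    B.rank_submatrix_of_span_cols_eq id hspan
  have hYY : (A.submatrix ((↑) : Y → m) ((↑) : Y → m)).rank =
      (A.submatrix ((↑) : X → m) ((↑) : X → m)).rank :=
    calc (A.submatrix ((↑) : Y → m) ((↑) : Y → m)).rank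
        = (A.submatrix ((↑) : Y → m) ((↑) : X → m)).rank :=
          B.rank_submatrix_of_span_cols_eq (fun i : Y => (⟨i, hYX i.2⟩ : X)) hspan
      _ = (A.submatrix ((↑) : X → m) ((↑) : Y → m)).rank := rank_submatrix_comm hA _ _
      _ = _ := hXY
  have hrank : (A.submatrix ((↑) : X → m) ((↑) : X → m)).rank = Y.card :=
    hXY.symm.trans hcard
  exact ⟨Y, hYX, hrank.symm, det_ne_zero_of_rank_eq_card (by rw [hYY, hrank, Fintype.card_coe])⟩

theorem card_le_rank_add_two_mul_card_sdiff [DecidableEq m] (A : Matrix m m F) (X : Finset m)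
    {Z : Finset m} (hZ : (A.submatrix ((↑) : Z → m) ((↑) : Z → m)).det ≠ 0) :
    Z.card ≤ (A.submatrix ((↑) : X → m) ((↑) : X → m)).rank + 2 * (Z \ X).card :=
  calc Z.card = (A.submatrix ((↑) : Z → m) ((↑) : Z → m)).rank := by
        rw [rank_of_det_ne_zero hZ, Fintype.card_coe]
    _ ≤ (A.submatrix ((↑) : ↥(Z ∩ X) → m) ((↑) : ↥(Z ∩ X) → m)).rank +
          2 * (Z \ X).card := by
        simpa only [Finset.sdiff_inter_self_left] using
          A.rank_submatrix_le_add_two_mul_card_sdiff (Z ∩ X) Z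
    _ ≤ _ := by
        have hZX : Z ∩ X ⊆ X := Finset.inter_subset_right
        let ι : ↥(Z ∩ X) → X := fun i => ⟨i, hZX i.2⟩
        gcongr
        exact (A.submatrix ((↑) : X → m) ((↑) : X → m)).rank_submatrix_le ι ι

end Matrix

theorem Finset.card_symmDiff_add_card {α : Type*} [DecidableEq α] (X Z : Finset α) :
    (X ∆ Z).card + Z.card = X.card + 2 * (Z \ X).card := by
  rw [Finset.symmDiff_def, Finset.card_union_of_disjoint disjoint_sdiff_sdiff]
  have hX := Finset.card_sdiff_add_card_inter X Z
  have hZ := Finset.card_sdiff_add_card_inter Z X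
  rw [Finset.inter_comm] at hZ
  omega

theorem dSS_eq_of_mem_of_forall_le {α : Type*} [DecidableEq α] {D : Set (Finset α)}
    {X Y : Finset α} (hY : Y ∈ D)
    (hmin : ∀ Z ∈ D, (X ∆ Y).card ≤ (X ∆ Z).card) : dSS D X = (X ∆ Y).card :=
  le_antisymm (Nat.sInf_le ⟨Y, hY, rfl⟩)
    (le_csInf ⟨_, Y, hY, rfl⟩ (by rintro _ ⟨Z, hZ, rfl⟩; exact hmin Z hZ))

open Matrix in
/-- for a symmetric or skew-symmetric matrix `A` over a field,
the distance `d_{M_A}(X)` equals the nullity of the principal submatrix `A[X]`. -/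
theorem dist_eq_nullity {F : Type*} [Field F] (A : Matrix V V F)
    (hA : A.IsSymm ∨ Aᵀ = -A) (X : Finset V) :
    dSS {Y : Finset V |
        (A.submatrix (fun i : Y => (i : V)) (fun i : Y => (i : V))).det ≠ 0} X =
      X.card - (A.submatrix (fun i : X => (i : V)) (fun i : X => (i : V))).rank := by
  obtain ⟨Y, hYX, hYcard, hYdet⟩ := exists_subset_card_eq_rank_det_ne_zero hA X
  have hXY : (X ∆ Y).card = X.card - Y.card := by
    rw [symmDiff_of_ge hYX, Finset.card_sdiff_of_subset hYX]
  rw [← hYcard, ← hXY]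
  refine dSS_eq_of_mem_of_forall_le hYdet fun Z hZ => ?_
  have hZ_card := card_le_rank_add_two_mul_card_sdiff A X hZ
  have hXZ := Finset.card_symmDiff_add_card X Z
  omega
end

section
/- Let G be a symmetric V × V matrix over GF(2) (a graph with loops allowed) having a looped vertex v (i.e., G_{vv} = 1). Then among the three nullities n(G), n(G*v), n(G+v), precisely two are equal to some value m and the third equals m + 1. -/
open scoped symmDiff

variable {V : Type*} [DecidableEq V] [Fintype V]

/-- Loop complementation on a graph (symmetric matrix over GF(2)): add `1` to
the diagonal entry at `v`. -/
def loopCompl (G : Matrix V V (ZMod 2)) (v : V) : Matrix V V (ZMod 2) :=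
  G + Matrix.single v v 1

/-- Pivot (local complementation) of a graph on a looped vertex `v`. -/
def locCompl (G : Matrix V V (ZMod 2)) (v : V) : Matrix V V (ZMod 2) :=
  Matrix.of fun x y => if x = v ∨ y = v then G x y else G x y + G x v * G v y

/-- Nullity of a square matrix over GF(2). -/
noncomputable def nullity {n : Type*} [Fintype n] [DecidableEq n]
    (A : Matrix n n (ZMod 2)) : ℕ :=
  Fintype.card n - A.rank

/-!
Write `e` for the unit vector at `v` and `c = G e + e` for column `v` of `G` with its `v`-entry
cleared. Over GF(2) the kernels of `G`, `G + v` and `G * v` are the spaces `{x | G x = x_v • w}`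
for `w = 0`, `e` and `c` (for the pivot because `G * v = G + c rᵀ`, `r` the cleared row `v`, and
`c_v = 0` forces `r ⬝ x = x_v` on the kernel). Each of them meets `{x_v = 0}` in
`ker G ∩ {x_v = 0}`, and is one dimension larger exactly when `G x = w` has a solution with
`x_v = 1`. As `G` is symmetric, its range is orthogonal to its kernel. So if `G x₀ = e` is
solvable, no kernel vector has `x_v = 1`, and `x₀ v` decides which of `w = e`, `w = c` admits
a solution with `x_v = 1`; otherwise some kernel vector has `x_v = 1` and neither does.
-/

open Matrix Module

theorem Submodule.finrank_inf_ker_add_one {K M : Type*} [Field K] [AddCommGroup M] [Module K M]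
    {S : Submodule K M} [FiniteDimensional K S] {f : Module.Dual K M} {x : M} (hx : x ∈ S)
    (hfx : f x ≠ 0) : finrank K ↥(S ⊓ LinearMap.ker f) + 1 = finrank K S := by
  have hne : f ∘ₗ S.subtype ≠ 0 := fun h => hfx (by simpa using LinearMap.congr_fun h ⟨x, hx⟩)
  rw [← Module.Dual.finrank_ker_add_one_of_ne_zero hne, LinearMap.ker_comp,
    ← Submodule.finrank_map_subtype_eq, Submodule.map_comap_subtype]

theorem ZMod.eq_zero_or_eq_one (a : ZMod 2) : a = 0 ∨ a = 1 := by
  revert a; decide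

namespace Matrix

section Field

variable {K : Type*} [Field K]

theorem ker_add_vecMulVec_single_inf_ker_proj (G : Matrix V V K) (w : V → K) (v : V) :
    LinearMap.ker (G + vecMulVec w (Pi.single v 1)).mulVecLin ⊓ LinearMap.ker (LinearMap.proj v) =
      LinearMap.ker G.mulVecLin ⊓ LinearMap.ker (LinearMap.proj v) := by
  ext x
  simp only [Submodule.mem_inf, LinearMap.mem_ker, mulVecLin_apply, LinearMap.proj_apply,
    add_mulVec, vecMulVec_mulVec, single_one_dotProduct]
  constructor <;> rintro ⟨h, hv⟩ <;> simpa [hv] using h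

namespace IsSymm

variable {G : Matrix V V K} (hG : G.IsSymm)
include hG

theorem mem_range_mulVecLin_iff {y : V → K} :
    y ∈ LinearMap.range G.mulVecLin ↔ ∀ z, G *ᵥ z = 0 → z ⬝ᵥ y = 0 := by
  have vecMul_eq (z : V → K) : z ᵥ* G = G *ᵥ z := by rw [← mulVec_transpose, hG.eq]
  constructor
  · rintro ⟨x, rfl⟩ z hz
    rw [mulVecLin_apply, dotProduct_mulVec, vecMul_eq, hz, zero_dotProduct]
  · intro h
    rw [← Subspace.forall_mem_dualAnnihilator_apply_eq_zero_iff]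
    intro φ hφ
    obtain ⟨z, rfl⟩ := (dotProductEquiv K V).surjective φ
    refine h z ?_
    rw [← vecMul_eq]
    refine dotProduct_eq_zero _ fun u => ?_
    rw [← dotProduct_mulVec]
    exact (Submodule.mem_dualAnnihilator _).mp hφ _ ⟨u, rfl⟩

variable {v : V} {x₀ : V → K} (hx₀ : G *ᵥ x₀ = Pi.single v 1)
include hx₀

theorem apply_eq_zero_of_mulVec_eq_zero {z : V → K} (hz : G *ᵥ z = 0) : z v = 0 := by
  simpa using hG.mem_range_mulVecLin_iff.1 ⟨x₀, hx₀⟩ z hz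

theorem exists_mulVec_eq_single_iff :
    (∃ x, G *ᵥ x = Pi.single v 1 ∧ x v = 1) ↔ x₀ v = 1 := by
  refine ⟨fun ⟨x, hx, hxv⟩ => ?_, fun h => ⟨x₀, hx₀, h⟩⟩
  have := hG.apply_eq_zero_of_mulVec_eq_zero hx₀ (z := x - x₀)
    (by rw [mulVec_sub, hx, hx₀, sub_self])
  rwa [Pi.sub_apply, sub_eq_zero, hxv, eq_comm] at this

theorem exists_mulVec_eq_col_add_single_iff :
    (∃ x, G *ᵥ x = G *ᵥ Pi.single v 1 + Pi.single v 1 ∧ x v = 1) ↔ x₀ v = 0 := by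
  constructor
  · rintro ⟨x, hx, hxv⟩
    have := hG.apply_eq_zero_of_mulVec_eq_zero hx₀ (z := x - Pi.single v 1 - x₀)
      (by rw [mulVec_sub, mulVec_sub, hx, hx₀]; abel)
    simpa [hxv] using this
  · intro h
    exact ⟨x₀ + Pi.single v 1, by rw [mulVec_add, hx₀, add_comm], by simp [h]⟩

end IsSymm

end Field

section GF2

theorem nullity_eq_finrank_ker (A : Matrix V V (ZMod 2)) :
    nullity A = finrank (ZMod 2) (LinearMap.ker A.mulVecLin) := by
  have := LinearMap.finrank_range_add_finrank_ker A.mulVecLin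
  rw [finrank_fintype_fun_eq_card] at this
  rw [nullity, rank]
  omega

theorem nullity_add_vecMulVec_single (G : Matrix V V (ZMod 2)) (v : V) (w : V → ZMod 2) :
    nullity (G + vecMulVec w (Pi.single v 1)) =
      finrank (ZMod 2) ↥(LinearMap.ker G.mulVecLin ⊓ LinearMap.ker (LinearMap.proj v)) +
        if ∃ x, G *ᵥ x = w ∧ x v = 1 then 1 else 0 := by
  have : Nonempty V := ⟨v⟩
  have hmulVec (x : V → ZMod 2) :
      (G + vecMulVec w (Pi.single v 1)) *ᵥ x = G *ᵥ x + x v • w := by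
    rw [add_mulVec, vecMulVec_mulVec, op_smul_eq_smul, single_one_dotProduct]
  rw [nullity_eq_finrank_ker, ← ker_add_vecMulVec_single_inf_ker_proj G w v]
  split_ifs with h
  · obtain ⟨x, hx, hxv⟩ := h
    refine (Submodule.finrank_inf_ker_add_one (x := x) ?_ (by simp [hxv])).symm
    rw [LinearMap.mem_ker, mulVecLin_apply, hmulVec, hx, hxv, one_smul, CharTwo.add_self_eq_zero]
  · rw [add_zero, inf_eq_left.mpr]
    intro x hx
    rw [LinearMap.mem_ker, mulVecLin_apply, hmulVec] at hx
    refine (ZMod.eq_zero_or_eq_one (x v)).resolve_right fun hxv => h ⟨x, ?_, hxv⟩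
    rwa [hxv, one_smul, CharTwo.add_eq_zero] at hx

theorem IsSymm.exists_mulVec_eq_zero_apply_eq_one {G : Matrix V V (ZMod 2)} (hG : G.IsSymm) {v : V}
    (h : ¬ ∃ x, G *ᵥ x = Pi.single v 1) : ∃ z, G *ᵥ z = 0 ∧ z v = 1 := by
  have : ¬ ∀ z, G *ᵥ z = 0 → z ⬝ᵥ Pi.single v 1 = 0 :=
    fun h' => h (hG.mem_range_mulVecLin_iff.2 h')
  push Not at this
  obtain ⟨z, hz, hzv⟩ := this
  exact ⟨z, hz, (ZMod.eq_zero_or_eq_one _).resolve_left (by simpa using hzv)⟩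

omit [Fintype V] in
theorem loopCompl_eq_add_vecMulVec (G : Matrix V V (ZMod 2)) (v : V) :
    loopCompl G v = G + vecMulVec (Pi.single v 1) (Pi.single v 1) := by
  rw [loopCompl, single_eq_single_vecMulVec_single]

variable {G : Matrix V V (ZMod 2)} {v : V} (hv : G v v = 1)
include hv

theorem locCompl_eq_add_vecMulVec :
    locCompl G v = G + vecMulVec (G *ᵥ Pi.single v 1 + Pi.single v 1)
      (Pi.single v 1 ᵥ* G + Pi.single v 1) := by
  ext x y
  by_cases hx : x = v <;> by_cases hy : y = v <;>
    simp [locCompl, vecMulVec_apply, hx, hy, hv, CharTwo.add_self_eq_zero]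

theorem ker_locCompl :
    LinearMap.ker (locCompl G v).mulVecLin = LinearMap.ker
      (G + vecMulVec (G *ᵥ Pi.single v 1 + Pi.single v 1) (Pi.single v 1)).mulVecLin := by
  ext x
  set c := G *ᵥ Pi.single v 1 + Pi.single v 1
  have hc : c v = 0 := by simp [c, hv, CharTwo.add_self_eq_zero]
  have hcol : ∀ s : ZMod 2, G *ᵥ x + s • c = 0 → (G *ᵥ x) v = 0 := fun s h => by
    simpa [hc] using congrFun h v
  have hrow : (Pi.single v 1 ᵥ* G + Pi.single v 1) ⬝ᵥ x = (G *ᵥ x) v + x v := by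
    rw [add_dotProduct, ← dotProduct_mulVec, single_one_dotProduct, single_one_dotProduct]
  simp only [locCompl_eq_add_vecMulVec hv, LinearMap.mem_ker, mulVecLin_apply, add_mulVec,
    vecMulVec_mulVec, op_smul_eq_smul, hrow, single_one_dotProduct]
  constructor
  · intro h
    rwa [hcol _ h, zero_add] at h
  · intro h
    rwa [hcol _ h, zero_add]

end GF2

end Matrix

/-- for a graph `G` with a looped vertex `v`, among the
nullities `n(G)`, `n(G*v)`, `n(G+v)`, precisely two equal some `m` and the
third equals `m + 1`. -/
theorem nullity_loop_pivot (G : Matrix V V (ZMod 2)) (hG : G.IsSymm)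
    (v : V) (hv : G v v = 1) :
    ∃ m : ℕ,
      (nullity G = m ∧ nullity (locCompl G v) = m ∧ nullity (loopCompl G v) = m + 1) ∨
      (nullity G = m ∧ nullity (loopCompl G v) = m ∧ nullity (locCompl G v) = m + 1) ∨
      (nullity (locCompl G v) = m ∧ nullity (loopCompl G v) = m ∧ nullity G = m + 1) := by
  have hG₀ := nullity_add_vecMulVec_single G v 0
  have hGe := nullity_add_vecMulVec_single G v (Pi.single v 1)
  have hGc := nullity_add_vecMulVec_single G v (G *ᵥ Pi.single v 1 + Pi.single v 1)
  rw [zero_vecMulVec, add_zero] at hG₀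
  rw [← loopCompl_eq_add_vecMulVec] at hGe
  rw [nullity_eq_finrank_ker, ← ker_locCompl hv, ← nullity_eq_finrank_ker] at hGc
  refine ⟨finrank (ZMod 2) ↥(LinearMap.ker G.mulVecLin ⊓ LinearMap.ker (LinearMap.proj v)), ?_⟩
  rw [hG₀, hGe, hGc]
  by_cases hsol : ∃ x₀, G *ᵥ x₀ = Pi.single v 1
  · obtain ⟨x₀, hx₀⟩ := hsol
    have h₀ : ¬ ∃ z, G *ᵥ z = 0 ∧ z v = 1 := fun ⟨z, hz, hzv⟩ => by
      simp [hG.apply_eq_zero_of_mulVec_eq_zero hx₀ hz] at hzv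
    simp only [h₀, hG.exists_mulVec_eq_single_iff hx₀,
      hG.exists_mulVec_eq_col_add_single_iff hx₀]
    rcases ZMod.eq_zero_or_eq_one (x₀ v) with h | h <;> simp [h]
  · have he : ¬ ∃ x, G *ᵥ x = Pi.single v 1 ∧ x v = 1 := fun ⟨x, hx, _⟩ => hsol ⟨x, hx⟩
    have hc : ¬ ∃ x, G *ᵥ x = G *ᵥ Pi.single v 1 + Pi.single v 1 ∧ x v = 1 := fun ⟨x, hx, _⟩ =>
      hsol ⟨x - Pi.single v 1, by rw [mulVec_sub, hx, add_sub_cancel_left]⟩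
    simp only [hG.exists_mulVec_eq_zero_apply_eq_one hsol, he, hc, if_true, if_false]
    simp
end

section
/- Let G be a symmetric V × V matrix over GF(2) (a graph with loops allowed) and v ∈ V. Then among the three nullities n(G), n(G∖v), n(G+v), precisely two are equal to some value m and the third equals m + 1, where G∖v is the principal submatrix of G obtained by deleting the row and column of v. -/
open scoped symmDiff

variable {V : Type*} [DecidableEq V] [Fintype V]

/-- The induced subgraph on `V ∖ {v}`: delete the row and column of `v`. -/
def deleteVertex (G : Matrix V V (ZMod 2)) (v : V) :
    Matrix {x : V // x ≠ v} {x : V // x ≠ v} (ZMod 2) :=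
  G.submatrix Subtype.val Subtype.val

/-!
Let `W` be the space of vectors `x` with `(G x) u = 0` for every `u ≠ v`, and consider on `W`
the functionals `α x = x v` and `β x = (G x) v`. The kernels of `G`, of `G + v` and of `G ∖ v`
(extended by zero) are the kernels of `β`, `α + β` and `α` on `W`. For `x, y ∈ W` symmetry gives
`α x * β y = x ⬝ G y = y ⬝ G x = α y * β x`, so `α` and `β` are proportional and over GF(2) one of
`α`, `β`, `α + β` vanishes. Not all three do: either some kernel vector of `G` has `x v ≠ 0`, or
`Pi.single v 1` lies in the column space of `G`, which is the orthogonal complement of its kernel.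
So one kernel is all of `W` and the other two are hyperplanes of it.
-/

open Module

section Functionals

variable {K W : Type*} [Field K] [AddCommGroup W] [Module K W]

lemma Module.Dual.exists_eq_smul_of_mul_comm {α β : Dual K W}
    (hαβ : ∀ x y, α x * β y = α y * β x) (hα : α ≠ 0) : ∃ c : K, β = c • α := by
  obtain ⟨x₀, hx₀⟩ := DFunLike.ne_iff.mp hα
  refine ⟨β x₀ / α x₀, LinearMap.ext fun y => ?_⟩
  rw [LinearMap.smul_apply, smul_eq_mul, div_mul_eq_mul_div, eq_div_iff hx₀]
  linear_combination hαβ x₀ y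

lemma LinearMap.finrank_ker_domRestrict {M N : Type*} [AddCommGroup M] [Module K M]
    [AddCommGroup N] [Module K N] (f : M →ₗ[K] N) (p : Submodule K M) :
    finrank K (LinearMap.ker (f.domRestrict p)) = finrank K ↥(p ⊓ ker f) := by
  rw [ker_domRestrict, ← Submodule.finrank_map_subtype_eq, Submodule.map_comap_subtype]

end Functionals

section GF2

variable {W : Type*} [AddCommGroup W] [Module (ZMod 2) W]

lemma Module.Dual.eq_zero_or_eq_zero_or_eq_of_mul_comm {α β : Dual (ZMod 2) W}
    (hαβ : ∀ x y, α x * β y = α y * β x) : α = 0 ∨ β = 0 ∨ β = α := by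
  by_cases hα : α = 0
  · exact .inl hα
  obtain ⟨c, rfl⟩ := exists_eq_smul_of_mul_comm hαβ hα
  rcases (by decide : ∀ c : ZMod 2, c = 0 ∨ c = 1) c with rfl | rfl <;> simp

theorem Module.Dual.exists_finrank_ker_trichotomy [FiniteDimensional (ZMod 2) W]
    (α β : Dual (ZMod 2) W) (hαβ : ∀ x y, α x * β y = α y * β x) (hne : α ≠ 0 ∨ β ≠ 0) :
    ∃ m : ℕ,
      (finrank (ZMod 2) (LinearMap.ker β) = m ∧ finrank (ZMod 2) (LinearMap.ker α) = m ∧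
        finrank (ZMod 2) (LinearMap.ker (α + β)) = m + 1) ∨
      (finrank (ZMod 2) (LinearMap.ker β) = m ∧ finrank (ZMod 2) (LinearMap.ker (α + β)) = m ∧
        finrank (ZMod 2) (LinearMap.ker α) = m + 1) ∨
      (finrank (ZMod 2) (LinearMap.ker α) = m ∧ finrank (ZMod 2) (LinearMap.ker (α + β)) = m ∧
        finrank (ZMod 2) (LinearMap.ker β) = m + 1) := by
  have finrank_ker_zero :
      finrank (ZMod 2) (LinearMap.ker (0 : Dual (ZMod 2) W)) = finrank (ZMod 2) W := by
    rw [LinearMap.ker_zero, finrank_top]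
  refine ⟨finrank (ZMod 2) W - 1, ?_⟩
  rcases eq_zero_or_eq_zero_or_eq_of_mul_comm hαβ with hα | hβ | hβα
  · have := finrank_ker_add_one_of_ne_zero (hne.resolve_left (not_not.mpr hα))
    rw [hα, zero_add, finrank_ker_zero]
    omega
  · have := finrank_ker_add_one_of_ne_zero (hne.resolve_right (not_not.mpr hβ))
    rw [hβ, add_zero, finrank_ker_zero]
    omega
  · have hα : α ≠ 0 := by rintro rfl; simp [hβα] at hne
    have := finrank_ker_add_one_of_ne_zero hα
    have hαα : α + α = 0 := LinearMap.ext fun x => CharTwo.add_self_eq_zero (α x)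
    rw [hβα, hαα, finrank_ker_zero]
    omega

end GF2

namespace Matrix

variable {K : Type*} [Field K]

lemma exists_vecMul_eq_single {m n : Type*} [Fintype m] [Fintype n] [DecidableEq n]
    (A : Matrix m n K) (i : n) (h : ∀ x, A *ᵥ x = 0 → x i = 0) :
    ∃ w, w ᵥ* A = Pi.single i 1 := by
  classical
  have hi : LinearMap.proj i ∈ (LinearMap.ker A.mulVecLin).dualAnnihilator :=
    (Submodule.mem_dualAnnihilator _).mpr fun x hx => h x hx
  obtain ⟨φ, hφ⟩ := LinearMap.range_dualMap_eq_dualAnnihilator_ker A.mulVecLin ▸ hi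
  refine ⟨(dotProductEquiv K m).symm φ, dotProduct_eq _ _ fun x => ?_⟩
  rw [← dotProduct_mulVec, single_dotProduct, one_mul, ← dotProductEquiv_apply_apply,
    LinearEquiv.apply_symm_apply]
  exact LinearMap.congr_fun hφ x

def kerDeleteRow (A : Matrix V V K) (v : V) : Submodule K (V → K) where
  carrier := {x | ∀ u ≠ v, (A *ᵥ x) u = 0}
  add_mem' hx hy u hu := by simp [mulVec_add, hx u hu, hy u hu]
  zero_mem' u _ := by simp
  smul_mem' c x hx u hu := by simp [mulVec_smul, hx u hu]

variable {A : Matrix V V K} {v : V} {x : V → K}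

set_option linter.unusedSectionVars false in
lemma mem_kerDeleteRow : x ∈ kerDeleteRow A v ↔ ∀ u ≠ v, (A *ᵥ x) u = 0 := Iff.rfl

lemma mulVec_eq_single_of_mem_kerDeleteRow (hx : x ∈ kerDeleteRow A v) :
    A *ᵥ x = Pi.single v ((A *ᵥ x) v) := by
  ext u
  rcases eq_or_ne u v with rfl | hu
  · simp
  · simp [hx u hu, hu]

lemma kerDeleteRow_inf_ker_add_single (c : K) :
    kerDeleteRow A v ⊓ LinearMap.ker (c • LinearMap.proj v + LinearMap.proj v ∘ₗ A.mulVecLin)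
      = LinearMap.ker (A + single v v c).mulVecLin := by
  ext x
  simp only [Submodule.mem_inf, mem_kerDeleteRow, LinearMap.mem_ker, mulVecLin_apply,
    add_mulVec, single_mulVec, LinearMap.add_apply, LinearMap.smul_apply, LinearMap.comp_apply,
    LinearMap.proj_apply, smul_eq_mul, funext_iff, Pi.add_apply, Function.update_apply,
    Pi.zero_apply]
  constructor
  · rintro ⟨hA, hv⟩ u
    rcases eq_or_ne u v with rfl | hu
    · simpa [add_comm] using hv
    · simp [hA u hu, hu]
  · intro h
    exact ⟨fun u hu => by simpa [hu] using h u, by simpa [add_comm] using h v⟩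

lemma kerDeleteRow_inf_ker_proj_mulVec :
    kerDeleteRow A v ⊓ LinearMap.ker (LinearMap.proj v ∘ₗ A.mulVecLin)
      = LinearMap.ker A.mulVecLin := by
  simpa using kerDeleteRow_inf_ker_add_single (A := A) (v := v) 0

lemma submatrix_mulVec_comp_val (hx : x v = 0) (a : {u // u ≠ v}) :
    ((A.submatrix (↑) (↑) : Matrix {u // u ≠ v} {u // u ≠ v} K) *ᵥ (x ∘ (↑))) a
      = (A *ᵥ x) a := by
  simp only [mulVec, dotProduct, submatrix_apply, Function.comp_apply]
  rw [Fintype.sum_eq_add_sum_subtype_ne _ v, hx, mul_zero, zero_add]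

lemma map_extendByZero_ker_submatrix :
    (LinearMap.ker (A.submatrix (↑) (↑) : Matrix {u // u ≠ v} {u // u ≠ v} K).mulVecLin).map
        (Function.ExtendByZero.linearMap K ((↑) : {u // u ≠ v} → V))
      = kerDeleteRow A v ⊓ LinearMap.ker (LinearMap.proj v) := by
  have extend_apply_self (y : {u // u ≠ v} → K) :
      Function.extend Subtype.val y (0 : V → K) v = 0 :=
    Function.extend_apply' _ _ _ fun ⟨a, ha⟩ => a.2 ha
  have coe_extendByZero (y : {u // u ≠ v} → K) :
      Function.ExtendByZero.linearMap K Subtype.val y = Function.extend Subtype.val y 0 := rfl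
  ext x
  simp only [Submodule.mem_map, Submodule.mem_inf, mem_kerDeleteRow, LinearMap.mem_ker,
    mulVecLin_apply, LinearMap.proj_apply, coe_extendByZero]
  constructor
  · rintro ⟨y, hy, rfl⟩
    refine ⟨fun u hu => ?_, extend_apply_self y⟩
    rw [← submatrix_mulVec_comp_val (extend_apply_self y) ⟨u, hu⟩,
      Function.extend_comp Subtype.val_injective, hy, Pi.zero_apply]
  · rintro ⟨hx, hv⟩
    refine ⟨x ∘ (↑), funext fun a => ?_, funext fun u => ?_⟩
    · rw [submatrix_mulVec_comp_val hv]
      exact hx a a.2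
    · rcases eq_or_ne u v with rfl | hu
      · rw [extend_apply_self, hv]
      · exact Subtype.val_injective.extend_apply _ _ (⟨u, hu⟩ : {u // u ≠ v})

lemma finrank_ker_submatrix_eq :
    finrank K
        (LinearMap.ker (A.submatrix (↑) (↑) : Matrix {u // u ≠ v} {u // u ≠ v} K).mulVecLin)
      = finrank K (LinearMap.ker ((LinearMap.proj v).domRestrict (kerDeleteRow A v))) := by
  rw [LinearMap.finrank_ker_domRestrict, ← map_extendByZero_ker_submatrix]
  exact (Submodule.equivMapOfInjective _
    (Function.extend_injective Subtype.val_injective (0 : V → K)) _).finrank_eq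

lemma dotProduct_mulVec_of_mem_kerDeleteRow (hx : x ∈ kerDeleteRow A v) (y : V → K) :
    y ⬝ᵥ A *ᵥ x = y v * (A *ᵥ x) v := by
  conv_lhs => rw [mulVec_eq_single_of_mem_kerDeleteRow hx]
  exact dotProduct_single ..

lemma IsSymm.apply_mul_mulVec_comm (hA : A.IsSymm) {y : V → K} (hx : x ∈ kerDeleteRow A v)
    (hy : y ∈ kerDeleteRow A v) : x v * (A *ᵥ y) v = y v * (A *ᵥ x) v :=
  calc x v * (A *ᵥ y) v = x ⬝ᵥ A *ᵥ y := (dotProduct_mulVec_of_mem_kerDeleteRow hy x).symm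
    _ = y ⬝ᵥ A *ᵥ x := by rw [dotProduct_mulVec, ← mulVec_transpose, hA.eq, dotProduct_comm]
    _ = y v * (A *ᵥ x) v := dotProduct_mulVec_of_mem_kerDeleteRow hx y

lemma IsSymm.exists_mem_kerDeleteRow (hA : A.IsSymm) (v : V) :
    ∃ x ∈ kerDeleteRow A v, x v ≠ 0 ∨ (A *ᵥ x) v ≠ 0 := by
  by_cases h : ∃ x, A *ᵥ x = 0 ∧ x v ≠ 0
  · obtain ⟨x, hx, hxv⟩ := h
    exact ⟨x, fun u _ => by simp [hx], .inl hxv⟩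
  · push Not at h
    obtain ⟨w, hw⟩ := exists_vecMul_eq_single A v h
    rw [← mulVec_transpose, hA.eq] at hw
    exact ⟨w, fun u hu => by simp [hw, hu], .inr (by simp [hw])⟩

end Matrix

lemma nullity_eq_finrank_ker {n : Type*} [Fintype n] [DecidableEq n] (A : Matrix n n (ZMod 2)) :
    nullity A = finrank (ZMod 2) (LinearMap.ker A.mulVecLin) := by
  have := A.mulVecLin.finrank_range_add_finrank_ker
  rw [finrank_fintype_fun_eq_card] at this
  rw [nullity, Matrix.rank]
  omega

/-- for a graph `G` and vertex `v`, among the nullities `n(G)`,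
`n(G∖v)`, `n(G+v)`, precisely two equal some `m` and the third equals `m + 1`. -/
theorem nullity_delete_loop (G : Matrix V V (ZMod 2)) (hG : G.IsSymm) (v : V) :
    ∃ m : ℕ,
      (nullity G = m ∧ nullity (deleteVertex G v) = m ∧
        nullity (loopCompl G v) = m + 1) ∨
      (nullity G = m ∧ nullity (loopCompl G v) = m ∧
        nullity (deleteVertex G v) = m + 1) ∨
      (nullity (deleteVertex G v) = m ∧ nullity (loopCompl G v) = m ∧
        nullity G = m + 1) := by
  set W := G.kerDeleteRow v
  set α : Dual (ZMod 2) W := (LinearMap.proj v).domRestrict W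
  set β : Dual (ZMod 2) W := (LinearMap.proj v ∘ₗ G.mulVecLin).domRestrict W
  have nullity_G : nullity G = finrank (ZMod 2) (LinearMap.ker β) := by
    rw [nullity_eq_finrank_ker, LinearMap.finrank_ker_domRestrict,
      Matrix.kerDeleteRow_inf_ker_proj_mulVec]
  have nullity_delete : nullity (deleteVertex G v) = finrank (ZMod 2) (LinearMap.ker α) := by
    rw [nullity_eq_finrank_ker, deleteVertex, Matrix.finrank_ker_submatrix_eq]
  have nullity_loop : nullity (loopCompl G v) = finrank (ZMod 2) (LinearMap.ker (α + β)) := by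
    rw [nullity_eq_finrank_ker, loopCompl, ← Matrix.kerDeleteRow_inf_ker_add_single,
      ← LinearMap.finrank_ker_domRestrict, one_smul]
    rfl
  rw [nullity_G, nullity_delete, nullity_loop]
  refine Dual.exists_finrank_ker_trichotomy α β (fun x y => hG.apply_mul_mulVec_comm x.2 y.2) ?_
  obtain ⟨x, hx, hne⟩ := hG.exists_mem_kerDeleteRow v
  exact hne.imp (fun h => DFunLike.ne_iff.mpr ⟨⟨x, hx⟩, h⟩)
    (fun h => DFunLike.ne_iff.mpr ⟨⟨x, hx⟩, h⟩)
end
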